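/- arXiv:1901.10357 — 2 statements merged into one kernel-verified Lean document; each statement's English description precedes it below -/
import Mathlib

section
/- For each λ ∈ ℂ there exists a unique continuous function w_λ : (a,b) → ℂ satisfying the integral equation w_λ(x) = 1 − λ ∫_a^x (1/p(y)) (∫_a^y w_λ(ξ) r(ξ) dξ) dy for all x ∈ (a,b) (equivalently, the unique solution of ℓ(w) = λw on (a,b) with lim_{x↓a} w(x) = 1 and lim_{x↓a} w^{[1]}(x) = 0). Moreover, for each fixed x ∈ (a,b), the map λ ↦ w_λ(x) is entire (analytic on all of ℂ), and for every β ∈ (a,b) with x ≤ β it satisfies |w_λ(x)| ≤ exp(|λ|·𝒮(x)) ≤ exp(|λ|·𝒮(β)), where 𝒮(x) := ∫_a^x (𝔰(β) − 𝔰(ξ)) r(ξ) dξ with 𝔰(x) := ∫_c^x dξ/p(ξ); in particular λ ↦ w_λ(x) is of exponential type. -/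
open MeasureTheory Filter Topology
open scoped ENNReal

/-- A function is locally absolutely continuous on a set `I ⊆ ℝ` iff the fundamental theorem
of calculus holds for it between any two points of `I`. -/
def LocAC (f : ℝ → ℝ) (I : Set ℝ) : Prop :=
  ∀ x ∈ I, ∀ y ∈ I, IntervalIntegrable (deriv f) MeasureTheory.volume x y ∧
    f y - f x = ∫ t in x..y, deriv f t

open Set

/-!
The solution is the Neumann series `w_λ = ∑ (-λ)ⁿ uₙ` of the Picard iterates `u₀ = 1`,
`uₙ₊₁ = V uₙ` of the Volterra operator `V f(x) = ∫_a^x p(y)⁻¹ ∫_a^y f r dξ dy`.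
By Fubini, `V f(x) = ∫_a^x (∫_ξ^x 1/p) f(ξ) r(ξ) dξ`, and since `𝒮' = (∫_ξ^β 1/p) r`,
a bound `‖f‖ ≤ c 𝒮ⁿ / n!` below `β` becomes `‖V f‖ ≤ c 𝒮ⁿ⁺¹ / (n + 1)!`. Hence
`‖uₙ‖ ≤ 𝒮ⁿ / n!`: the series converges locally uniformly in `x` and `λ`, is entire in `λ`
and bounded by `exp (‖λ‖ 𝒮)`, and termwise integration gives the integral equation.
The difference `d` of two solutions satisfies `d = -λ V d`, so the same estimate gives
`‖d‖ ≤ C (‖λ‖ 𝒮)ⁿ / n! → 0`.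
-/

lemma IsOpen.exists_lt_mem {s : Set ℝ} (hs : IsOpen s) {x : ℝ} (hx : x ∈ s) :
    ∃ y < x, y ∈ s :=
  Filter.Eventually.exists_lt (hs.mem_nhds hx)

lemma IsOpen.exists_gt_mem {s : Set ℝ} (hs : IsOpen s) {x : ℝ} (hx : x ∈ s) :
    ∃ y > x, y ∈ s :=
  Filter.Eventually.exists_gt (hs.mem_nhds hx)

lemma inter_Iio_inter_Iio {I : Set ℝ} {y z : ℝ} (hyz : y ≤ z) :
    I ∩ Iio z ∩ Iio y = I ∩ Iio y := by
  rw [inter_assoc, Iio_inter_Iio, min_eq_right hyz]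

section IntegralFromLeft

variable {J : Set ℝ} {E : Type*} [NormedAddCommGroup E] {f : ℝ → E}

lemma inter_Iio_eq_union_Ico (hJ : J.OrdConnected) {x y : ℝ} (hx : x ∈ J) (hy : y ∈ J)
    (hyx : y ≤ x) : J ∩ Iio x = (J ∩ Iio y) ∪ Ico y x := by
  ext z
  constructor
  · rintro ⟨hzJ, hzx⟩
    rcases lt_or_ge z y with h | h
    exacts [Or.inl ⟨hzJ, h⟩, Or.inr ⟨h, hzx⟩]
  · rintro (⟨hzJ, hzy⟩ | ⟨hyz, hzx⟩)
    exacts [⟨hzJ, hzy.trans_le hyx⟩, ⟨hJ.out hy hx ⟨hyz, hzx.le⟩, hzx⟩]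

lemma integrableOn_inter_Iio_of_integrableOn (hJ : J.OrdConnected) {c : ℝ} (hc : c ∈ J)
    (hfc : ContinuousOn f J) (hf : IntegrableOn f (J ∩ Iio c)) {x : ℝ} (hx : x ∈ J) :
    IntegrableOn f (J ∩ Iio x) := by
  rcases le_total x c with h | h
  · exact hf.mono_set (inter_subset_inter_right _ (Iio_subset_Iio h))
  · rw [inter_Iio_eq_union_Ico hJ hx hc h]
    exact hf.union (((hfc.mono (hJ.out hc hx)).integrableOn_Icc).mono_set Ico_subset_Icc_self)

variable [NormedSpace ℝ E]

lemma setIntegral_inter_Iio_eq_add (hJ : J.OrdConnected) {x y : ℝ}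
    (hx : x ∈ J) (hy : y ∈ J) (hyx : y ≤ x) (hf : IntegrableOn f (J ∩ Iio x)) :
    ∫ ξ in J ∩ Iio x, f ξ = (∫ ξ in J ∩ Iio y, f ξ) + ∫ t in y..x, f t := by
  have hsplit := inter_Iio_eq_union_Ico hJ hx hy hyx
  have hdisj : Disjoint (J ∩ Iio y) (Ico y x) :=
    disjoint_left.2 fun z hz hz' => (not_le.2 hz.2) hz'.1
  rw [hsplit] at hf
  rw [hsplit, setIntegral_union hdisj measurableSet_Ico (hf.mono_set subset_union_left)
    (hf.mono_set subset_union_right), intervalIntegral.integral_of_le hyx,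
    integral_Ioc_eq_integral_Ioo, integral_Ico_eq_integral_Ioo]

variable [CompleteSpace E]

lemma hasDerivAt_setIntegral_inter_Iio (hJo : IsOpen J) (hJ : J.OrdConnected)
    (hfc : ContinuousOn f J) (hfi : ∀ x ∈ J, IntegrableOn f (J ∩ Iio x)) {x : ℝ}
    (hx : x ∈ J) : HasDerivAt (fun u => ∫ ξ in J ∩ Iio u, f ξ) (f x) x := by
  obtain ⟨y, hyx, hy⟩ := hJo.exists_lt_mem hx
  have hderiv : HasDerivAt (fun u => ∫ t in y..u, f t) (f x) x :=
    intervalIntegral.integral_hasDerivAt_right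
      ((hfc.mono (hJ.uIcc_subset hy hx)).intervalIntegrable)
      ⟨J, hJo.mem_nhds hx, hfc.aestronglyMeasurable hJo.measurableSet⟩
      (hfc.continuousAt (hJo.mem_nhds hx))
  refine (hderiv.const_add (∫ ξ in J ∩ Iio y, f ξ)).congr_of_eventuallyEq ?_
  filter_upwards [hJo.mem_nhds hx, Ioi_mem_nhds hyx] with u hu hyu
  exact setIntegral_inter_Iio_eq_add hJ hu hy hyu.le (hfi u hu)

lemma continuousOn_setIntegral_inter_Iio (hJo : IsOpen J) (hJ : J.OrdConnected)
    (hfc : ContinuousOn f J) (hfi : ∀ x ∈ J, IntegrableOn f (J ∩ Iio x)) :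
    ContinuousOn (fun u => ∫ ξ in J ∩ Iio u, f ξ) J := fun _ hx =>
  (hasDerivAt_setIntegral_inter_Iio hJo hJ hfc hfi hx).continuousAt.continuousWithinAt

lemma continuousOn_intervalIntegral_left (hJo : IsOpen J) (hJ : J.OrdConnected)
    (hfc : ContinuousOn f J) {β : ℝ} (hβ : β ∈ J) :
    ContinuousOn (fun ξ => ∫ t in ξ..β, f t) J := fun _ hξ =>
  (intervalIntegral.integral_hasDerivAt_left
    ((hfc.mono (hJ.uIcc_subset hξ hβ)).intervalIntegrable)
    ⟨J, hJo.mem_nhds hξ, hfc.aestronglyMeasurable hJo.measurableSet⟩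
    (hfc.continuousAt (hJo.mem_nhds hξ))).continuousAt.continuousWithinAt

lemma continuousOn_setIntegral_inter_Iio_of_integrableOn (hJo : IsOpen J) (hJ : J.OrdConnected)
    (hfc : ContinuousOn f J) {z : ℝ} (hfi : IntegrableOn f (J ∩ Iio z)) :
    ContinuousOn (fun u => ∫ ξ in J ∩ Iio u, f ξ) (J ∩ Iio z) := by
  refine (continuousOn_setIntegral_inter_Iio (hJo.inter isOpen_Iio)
    (hJ.inter ordConnected_Iio) (hfc.mono inter_subset_left) fun y hy => ?_).congr fun y hy => ?_
  · rw [inter_Iio_inter_Iio hy.2.le]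
    exact hfi.mono_set (inter_subset_inter_right _ (Iio_subset_Iio hy.2.le))
  · simp only [inter_Iio_inter_Iio hy.2.le]

end IntegralFromLeft

lemma IsOpen.exists_antitone_exhausting {s : Set ℝ} (hs : IsOpen s) (hne : s.Nonempty) :
    ∃ t : ℕ → ℝ, Antitone t ∧ (∀ k, t k ∈ s) ∧ ∀ y ∈ s, ∃ k, t k < y := by
  obtain ⟨u, hu_anti, hu_lim, hu_mem⟩ :=
    exists_seq_tendsto_sInf (hne.image ((↑) : ℝ → EReal)) (OrderBot.bddBelow _)
  choose t ht_mem ht_eq using hu_mem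
  refine ⟨t, fun i j hij => ?_, ht_mem, fun y hy => ?_⟩
  · exact EReal.coe_le_coe_iff.1 (by rw [ht_eq, ht_eq]; exact hu_anti hij)
  · obtain ⟨y', hy'y, hy'⟩ := hs.exists_lt_mem hy
    have hinf : sInf (((↑) : ℝ → EReal) '' s) < y :=
      (sInf_le (mem_image_of_mem _ hy')).trans_lt (EReal.coe_lt_coe_iff.2 hy'y)
    obtain ⟨k, hk⟩ := (hu_lim.eventually (gt_mem_nhds hinf)).exists
    exact ⟨k, EReal.coe_lt_coe_iff.1 (by rw [ht_eq]; exact hk)⟩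

lemma setIntegral_inter_Iio_le_of_hasDerivAt {J : Set ℝ} (hJo : IsOpen J)
    (hJ : J.OrdConnected) {f G : ℝ → ℝ} {x : ℝ} (hx : x ∈ J) (hfc : ContinuousOn f J)
    (hfi : IntegrableOn f (J ∩ Iio x)) (hG : ∀ y ∈ J, HasDerivAt G (f y) y)
    (hG0 : ∀ y ∈ J ∩ Iio x, 0 ≤ G y) :
    ∫ ξ in J ∩ Iio x, f ξ ≤ G x := by
  obtain ⟨y, hyx, hy⟩ := hJo.exists_lt_mem hx
  obtain ⟨t, ht_anti, ht_mem, ht_exh⟩ :=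
    (hJo.inter isOpen_Iio).exists_antitone_exhausting ⟨y, hy, hyx⟩
  have hU : (⋃ k, Ioo (t k) x) = J ∩ Iio x := by
    refine Subset.antisymm (iUnion_subset fun k z hz => ?_) fun z hz => ?_
    · exact ⟨hJ.out (ht_mem k).1 hx ⟨hz.1.le, hz.2.le⟩, hz.2⟩
    · obtain ⟨k, hk⟩ := ht_exh z hz
      exact mem_iUnion.2 ⟨k, hk, hz.2⟩
  have hlim := tendsto_setIntegral_of_monotone (fun k => measurableSet_Ioo)
    (fun k l hkl => Ioo_subset_Ioo (ht_anti hkl) le_rfl) (hU ▸ hfi)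
  rw [hU] at hlim
  refine le_of_tendsto hlim (Eventually.of_forall fun k => ?_)
  have htk := ht_mem k
  rw [← integral_Ioc_eq_integral_Ioo, ← intervalIntegral.integral_of_le htk.2.le,
    intervalIntegral.integral_eq_sub_of_hasDerivAt
      (fun u hu => hG u (hJ.uIcc_subset htk.1 hx hu))
      ((hfc.mono (hJ.uIcc_subset htk.1 hx)).intervalIntegrable)]
  linarith [hG0 _ htk]

lemma ofReal_intervalIntegral_eq_lintegral_Ioo {f : ℝ → ℝ} {y c : ℝ} (hyc : y ≤ c)
    (hfc : ContinuousOn f (Icc y c)) (hf0 : ∀ t ∈ Icc y c, 0 ≤ f t) :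
    ENNReal.ofReal (∫ t in y..c, f t) = ∫⁻ t in Ioo y c, ENNReal.ofReal (f t) := by
  rw [intervalIntegral.integral_of_le hyc, integral_Ioc_eq_integral_Ioo]
  exact ofReal_integral_eq_lintegral_ofReal (hfc.integrableOn_Icc.mono_set Ioo_subset_Icc_self)
    (ae_restrict_of_forall_mem measurableSet_Ioo fun t ht => hf0 t (Ioo_subset_Icc_self ht))

lemma lintegral_mul_lintegral_inter_Iio_swap {μ : Measure ℝ} [SFinite μ] {A : Set ℝ}
    {F G : ℝ → ℝ≥0∞} (hF : AEMeasurable F (μ.restrict A))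
    (hG : AEMeasurable G (μ.restrict A)) :
    ∫⁻ y in A, F y * ∫⁻ ξ in A ∩ Iio y, G ξ ∂μ ∂μ
      = ∫⁻ ξ in A, (∫⁻ y in A ∩ Ioi ξ, F y ∂μ) * G ξ ∂μ := by
  set T : Set (ℝ × ℝ) := {z | z.2 < z.1}
  set H : ℝ × ℝ → ℝ≥0∞ := T.indicator fun z => F z.1 * G z.2
  have hH : AEMeasurable H ((μ.restrict A).prod (μ.restrict A)) :=
    ((hF.comp_quasiMeasurePreserving Measure.quasiMeasurePreserving_fst).mul
      (hG.comp_quasiMeasurePreserving Measure.quasiMeasurePreserving_snd)).indicator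
      (measurableSet_lt measurable_snd measurable_fst)
  have hleft (y : ℝ) : F y * ∫⁻ ξ in A ∩ Iio y, G ξ ∂μ = ∫⁻ ξ in A, H (y, ξ) ∂μ := by
    rw [inter_comm, ← Measure.restrict_restrict measurableSet_Iio,
      ← lintegral_indicator measurableSet_Iio,
      ← lintegral_const_mul'' _ (hG.indicator measurableSet_Iio)]
    refine lintegral_congr fun ξ => ?_
    by_cases h : ξ < y <;> simp [H, T, h]
  have hright (ξ : ℝ) : (∫⁻ y in A ∩ Ioi ξ, F y ∂μ) * G ξ = ∫⁻ y in A, H (y, ξ) ∂μ := by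
    rw [inter_comm, ← Measure.restrict_restrict measurableSet_Ioi,
      ← lintegral_indicator measurableSet_Ioi,
      ← lintegral_mul_const'' _ (hF.indicator measurableSet_Ioi)]
    refine lintegral_congr fun y => ?_
    by_cases h : ξ < y <;> simp [H, T, h]
  simp_rw [hleft, hright]
  exact lintegral_lintegral_swap (f := fun y ξ => H (y, ξ)) hH

lemma LocAC.continuousOn {f : ℝ → ℝ} {J : Set ℝ} (hf : LocAC f J) (hJ : IsOpen J) :
    ContinuousOn f J := by
  intro x hx
  obtain ⟨y₀, hy₀x, hy₀⟩ := hJ.exists_lt_mem hx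
  obtain ⟨y₁, hxy₁, hy₁⟩ := hJ.exists_gt_mem hx
  have hprim : ContinuousOn (fun u => ∫ t in y₀..u, deriv f t) (uIcc y₀ y₁) :=
    intervalIntegral.continuousOn_primitive_interval' (hf y₀ hy₀ y₁ hy₁).1 left_mem_uIcc
  have hnhds : uIcc y₀ y₁ ∈ 𝓝 x := by
    rw [uIcc_of_le (hy₀x.trans hxy₁).le]
    exact Icc_mem_nhds hy₀x hxy₁
  have hcont : ContinuousAt (fun u => f y₀ + ∫ t in y₀..u, deriv f t) x :=
    continuousAt_const.add (hprim.continuousAt hnhds)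
  refine (hcont.congr ?_).continuousWithinAt
  filter_upwards [hJ.mem_nhds hx] with u hu
  linarith [(hf y₀ hy₀ u hu).2]

lemma integral_tsum_pow_mul_of_integral_norm_le {α : Type*} [MeasurableSpace α] {μ : Measure α}
    (z : ℂ) {g : ℕ → α → ℂ} (hg : ∀ n, Integrable (g n) μ) {C t : ℝ}
    (hbound : ∀ n, ∫ a, ‖g n a‖ ∂μ ≤ C * t ^ n / n.factorial) :
    ∫ a, ∑' n, z ^ n * g n a ∂μ = ∑' n, z ^ n * ∫ a, g n a ∂μ := by
  have hsum : Summable fun n => ∫ a, ‖z ^ n * g n a‖ ∂μ := by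
    refine ((Real.summable_pow_div_factorial (‖z‖ * t)).mul_left C).of_nonneg_of_le
      (fun n => integral_nonneg fun _ => norm_nonneg _) fun n => ?_
    simp only [norm_mul, norm_pow, integral_const_mul]
    calc ‖z‖ ^ n * ∫ a, ‖g n a‖ ∂μ ≤ ‖z‖ ^ n * (C * t ^ n / n.factorial) :=
          mul_le_mul_of_nonneg_left (hbound n) (by positivity)
      _ = C * ((‖z‖ * t) ^ n / n.factorial) := by ring
  rw [← integral_tsum_of_summable_integral_norm (fun n => (hg n).const_mul _) hsum]
  simp only [integral_const_mul]

namespace SturmLiouville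

structure Setting (I : Set ℝ) (p r : ℝ → ℝ) : Prop where
  isOpen : IsOpen I
  ordConnected : I.OrdConnected
  continuousOn_p : ContinuousOn p I
  continuousOn_r : ContinuousOn r I
  p_pos : ∀ x ∈ I, 0 < p x
  r_pos : ∀ x ∈ I, 0 < r x
  integrableOn_left : ∃ c ∈ I,
    IntegrableOn (fun y => (∫ t in y..c, (p t)⁻¹) * r y) (I ∩ Iio c)

/-- The paper's `𝒮(x) = ∫_a^x (𝔰(β) − 𝔰(ξ)) r(ξ) dξ`, where `𝔰(β) − 𝔰(ξ) = ∫_ξ^β 1/p`. -/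
noncomputable def typeFunction (I : Set ℝ) (p r : ℝ → ℝ) (β x : ℝ) : ℝ :=
  ∫ ξ in I ∩ Iio x, (∫ t in ξ..β, (p t)⁻¹) * r ξ

noncomputable def volterra (I : Set ℝ) (p r : ℝ → ℝ) (f : ℝ → ℂ) (x : ℝ) : ℂ :=
  ∫ y in I ∩ Iio x, ((p y : ℂ))⁻¹ * ∫ ξ in I ∩ Iio y, f ξ * (r ξ : ℂ)

noncomputable def picard (I : Set ℝ) (p r : ℝ → ℝ) : ℕ → ℝ → ℂ
  | 0 => fun _ => 1
  | n + 1 => volterra I p r (picard I p r n)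

noncomputable def solution (I : Set ℝ) (p r : ℝ → ℝ) (lam : ℂ) (x : ℝ) : ℂ :=
  ∑' n : ℕ, (-lam) ^ n * picard I p r n x

namespace Setting

variable {I : Set ℝ} {p r : ℝ → ℝ}

lemma of_lintegral_lt_top (hIo : IsOpen I) (hI : I.OrdConnected) (hpc : ContinuousOn p I)
    (hrc : ContinuousOn r I) (hp : ∀ x ∈ I, 0 < p x) (hr : ∀ x ∈ I, 0 < r x) {c : ℝ}
    (hc : c ∈ I)
    (hleft : ∫⁻ y in I ∩ Iio c,
      (∫⁻ x in Ioo y c, ENNReal.ofReal (p x)⁻¹) * ENNReal.ofReal (r y) < ⊤) :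
    Setting I p r := by
  have hpinv : ContinuousOn (fun y => (p y)⁻¹) I := hpc.inv₀ fun x hx => (hp x hx).ne'
  have hKm : MeasurableSet (I ∩ Iio c) := hIo.measurableSet.inter measurableSet_Iio
  have hq0 : ∀ y ∈ I ∩ Iio c, 0 ≤ ∫ t in y..c, (p t)⁻¹ := fun y hy =>
    intervalIntegral.integral_nonneg hy.2.le fun u hu => (inv_pos.2 (hp u (hI.out hy.1 hc hu))).le
  refine ⟨hIo, hI, hpc, hrc, hp, hr, c, hc,
    (((continuousOn_intervalIntegral_left hIo hI hpinv hc).mul hrc).mono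
      inter_subset_left).aestronglyMeasurable hKm, ?_⟩
  rw [hasFiniteIntegral_iff_ofReal (ae_restrict_of_forall_mem hKm fun y hy =>
    mul_nonneg (hq0 y hy) (hr y hy.1).le)]
  refine lt_of_eq_of_lt (setLIntegral_congr_fun hKm fun y hy => ?_) hleft
  have hIcc : Icc y c ⊆ I := hI.out hy.1 hc
  rw [ENNReal.ofReal_mul (hq0 y hy), ofReal_intervalIntegral_eq_lintegral_Ioo hy.2.le
    (hpinv.mono hIcc) fun t ht => (inv_pos.2 (hp t (hIcc ht))).le]

variable (hS : Setting I p r)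
include hS

lemma measurableSet_inter_Iio (x : ℝ) : MeasurableSet (I ∩ Iio x) :=
  hS.isOpen.measurableSet.inter measurableSet_Iio

lemma continuousOn_inv_p : ContinuousOn (fun y => (p y)⁻¹) I :=
  hS.continuousOn_p.inv₀ fun x hx => (hS.p_pos x hx).ne'

lemma inv_p_nonneg {x : ℝ} (hx : x ∈ I) : 0 ≤ (p x)⁻¹ :=
  inv_nonneg.2 (hS.p_pos x hx).le

lemma intervalIntegrable {E : Type*} [NormedAddCommGroup E] {f : ℝ → E}
    (hf : ContinuousOn f I) {x y : ℝ} (hx : x ∈ I) (hy : y ∈ I) :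
    IntervalIntegrable f volume x y :=
  (hf.mono (hS.ordConnected.uIcc_subset hx hy)).intervalIntegrable

lemma integrableOn_of_norm_le {E : Type*} [NormedAddCommGroup E] {g : ℝ → E} {h : ℝ → ℝ}
    {z M : ℝ} (hg : ContinuousOn g I) (hh : IntegrableOn h (I ∩ Iio z))
    (hbound : ∀ ξ ∈ I ∩ Iio z, ‖g ξ‖ ≤ M * h ξ) : IntegrableOn g (I ∩ Iio z) :=
  Integrable.mono' (hh.const_mul M)
    ((hg.mono inter_subset_left).aestronglyMeasurable (hS.measurableSet_inter_Iio z))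
    (ae_restrict_of_forall_mem (hS.measurableSet_inter_Iio z) hbound)

lemma integral_inv_p_nonneg {ξ β : ℝ} (hξ : ξ ∈ I) (hβ : β ∈ I) (hξβ : ξ ≤ β) :
    0 ≤ ∫ t in ξ..β, (p t)⁻¹ :=
  intervalIntegral.integral_nonneg hξβ fun _ ht =>
    hS.inv_p_nonneg (hS.ordConnected.out hξ hβ ht)

lemma integral_inv_p_mul_r_nonneg {ξ β : ℝ} (hξ : ξ ∈ I) (hβ : β ∈ I) (hξβ : ξ ≤ β) :
    0 ≤ (∫ t in ξ..β, (p t)⁻¹) * r ξ :=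
  mul_nonneg (hS.integral_inv_p_nonneg hξ hβ hξβ) (hS.r_pos ξ hξ).le

lemma integral_inv_p_add {ξ z β : ℝ} (hξ : ξ ∈ I) (hz : z ∈ I) (hβ : β ∈ I) :
    ∫ t in ξ..β, (p t)⁻¹ = (∫ t in ξ..z, (p t)⁻¹) + ∫ t in z..β, (p t)⁻¹ :=
  (intervalIntegral.integral_add_adjacent_intervals
    (hS.intervalIntegrable hS.continuousOn_inv_p hξ hz)
    (hS.intervalIntegrable hS.continuousOn_inv_p hz hβ)).symm

lemma integral_inv_p_mono {ξ y β : ℝ} (hξ : ξ ∈ I) (hy : y ∈ I) (hβ : β ∈ I) (hyβ : y ≤ β) :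
    ∫ t in ξ..y, (p t)⁻¹ ≤ ∫ t in ξ..β, (p t)⁻¹ := by
  rw [hS.integral_inv_p_add hξ hy hβ]
  linarith [hS.integral_inv_p_nonneg hy hβ hyβ]

lemma continuousOn_integral_inv_p {β : ℝ} (hβ : β ∈ I) :
    ContinuousOn (fun ξ => ∫ t in ξ..β, (p t)⁻¹) I :=
  continuousOn_intervalIntegral_left hS.isOpen hS.ordConnected hS.continuousOn_inv_p hβ

lemma integrableOn_r {x : ℝ} (hx : x ∈ I) : IntegrableOn r (I ∩ Iio x) := by
  obtain ⟨c, hc, hleft⟩ := hS.integrableOn_left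
  obtain ⟨c', hc'c, hc'⟩ := hS.isOpen.exists_lt_mem hc
  set δ := ∫ t in c'..c, (p t)⁻¹
  -- for `y < c'` we have `∫_y^c 1/p ≥ δ > 0`, so `r y ≤ δ⁻¹ (∫_y^c 1/p) r y`
  have hδ : 0 < δ :=
    intervalIntegral.intervalIntegral_pos_of_pos_on
      (hS.intervalIntegrable hS.continuousOn_inv_p hc' hc)
      (fun u hu => inv_pos.2 (hS.p_pos u (hS.ordConnected.out hc' hc ⟨hu.1.le, hu.2.le⟩))) hc'c
  have hnear : IntegrableOn r (I ∩ Iio c') := by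
    refine hS.integrableOn_of_norm_le (M := δ⁻¹) hS.continuousOn_r
      (hleft.mono_set (inter_subset_inter_right _ (Iio_subset_Iio hc'c.le))) fun y hy => ?_
    have hr := (hS.r_pos y hy.1).le
    rw [Real.norm_of_nonneg hr, le_inv_mul_iff₀ hδ, hS.integral_inv_p_add hy.1 hc' hc]
    nlinarith [hS.integral_inv_p_nonneg hy.1 hc' hy.2.le]
  exact integrableOn_inter_Iio_of_integrableOn hS.ordConnected hc' hS.continuousOn_r hnear hx

lemma integrableOn_integral_inv_p_mul_r {β x : ℝ} (hβ : β ∈ I) (hx : x ∈ I) :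
    IntegrableOn (fun ξ => (∫ t in ξ..β, (p t)⁻¹) * r ξ) (I ∩ Iio x) := by
  obtain ⟨c, hc, hleft⟩ := hS.integrableOn_left
  have hnear : IntegrableOn (fun ξ => (∫ t in ξ..β, (p t)⁻¹) * r ξ) (I ∩ Iio c) := by
    refine (hleft.add ((hS.integrableOn_r hc).const_mul (∫ t in c..β, (p t)⁻¹))).congr_fun
      (fun y hy => ?_) (hS.measurableSet_inter_Iio c)
    simp only [Pi.add_apply, hS.integral_inv_p_add hy.1 hc hβ]
    ring
  exact integrableOn_inter_Iio_of_integrableOn hS.ordConnected hc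
    ((hS.continuousOn_integral_inv_p hβ).mul hS.continuousOn_r) hnear hx

lemma inter_Iio_inter_Ioi {ξ z : ℝ} (hξ : ξ ∈ I) (hz : z ∈ I) :
    I ∩ Iio z ∩ Ioi ξ = Ioo ξ z := by
  ext u
  exact ⟨fun ⟨⟨_, huz⟩, hξu⟩ => ⟨hξu, huz⟩,
    fun ⟨hξu, huz⟩ => ⟨⟨hS.ordConnected.out hξ hz ⟨hξu.le, huz.le⟩, huz⟩, hξu⟩⟩

lemma inv_p_mul_setIntegral_nonneg {y z : ℝ} {f : ℝ → ℝ} (hf0 : ∀ ξ ∈ I ∩ Iio z, 0 ≤ f ξ)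
    (hy : y ∈ I ∩ Iio z) : 0 ≤ (p y)⁻¹ * ∫ ξ in I ∩ Iio y, f ξ * r ξ :=
  mul_nonneg (hS.inv_p_nonneg hy.1) (setIntegral_nonneg (hS.measurableSet_inter_Iio y)
    fun ξ hξ => mul_nonneg (hf0 ξ ⟨hξ.1, mem_Iio.2 (hξ.2.trans hy.2)⟩) (hS.r_pos ξ hξ.1).le)

section Fubini

variable {z : ℝ} (hz : z ∈ I) {f : ℝ → ℝ} (hfc : ContinuousOn f I)
  (hf0 : ∀ ξ ∈ I ∩ Iio z, 0 ≤ f ξ) {M : ℝ} (hM : ∀ ξ ∈ I ∩ Iio z, f ξ ≤ M)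
include hz hfc hf0 hM

lemma integrableOn_mul_r_inter_Iio {y : ℝ} (hy : y ≤ z) :
    IntegrableOn (fun ξ => f ξ * r ξ) (I ∩ Iio y) :=
  (hS.integrableOn_of_norm_le (hfc.fun_mul hS.continuousOn_r) (hS.integrableOn_r hz)
    fun ξ hξ => by
      rw [Real.norm_of_nonneg (mul_nonneg (hf0 ξ hξ) (hS.r_pos ξ hξ.1).le)]
      exact mul_le_mul_of_nonneg_right (hM ξ hξ) (hS.r_pos ξ hξ.1).le).mono_set
    (inter_subset_inter_right _ (Iio_subset_Iio hy))

lemma integrableOn_integral_inv_p_mul :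
    IntegrableOn (fun ξ => (∫ t in ξ..z, (p t)⁻¹) * (f ξ * r ξ)) (I ∩ Iio z) := by
  refine hS.integrableOn_of_norm_le (M := M)
    ((hS.continuousOn_integral_inv_p hz).mul (hfc.fun_mul hS.continuousOn_r))
    (hS.integrableOn_integral_inv_p_mul_r hz hz) fun ξ hξ => ?_
  have hq := hS.integral_inv_p_nonneg hξ.1 hz hξ.2.le
  have hr := (hS.r_pos ξ hξ.1).le
  rw [Real.norm_of_nonneg (mul_nonneg hq (mul_nonneg (hf0 ξ hξ) hr))]
  nlinarith [mul_le_mul_of_nonneg_right (hM ξ hξ) hr]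

lemma lintegral_inv_p_mul_setIntegral :
    ∫⁻ y in I ∩ Iio z, ENNReal.ofReal ((p y)⁻¹ * ∫ ξ in I ∩ Iio y, f ξ * r ξ)
      = ENNReal.ofReal (∫ ξ in I ∩ Iio z, (∫ t in ξ..z, (p t)⁻¹) * (f ξ * r ξ)) := by
  set A := I ∩ Iio z
  have hAm : MeasurableSet A := hS.measurableSet_inter_Iio z
  have hfr0 : ∀ ξ ∈ A, 0 ≤ f ξ * r ξ := fun ξ hξ => mul_nonneg (hf0 ξ hξ) (hS.r_pos ξ hξ.1).le
  have hq0 : ∀ ξ ∈ A, 0 ≤ ∫ t in ξ..z, (p t)⁻¹ := fun ξ hξ =>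
    hS.integral_inv_p_nonneg hξ.1 hz hξ.2.le
  have hinner : ∀ y ∈ A, ENNReal.ofReal ((p y)⁻¹ * ∫ ξ in I ∩ Iio y, f ξ * r ξ)
      = ENNReal.ofReal (p y)⁻¹ * ∫⁻ ξ in A ∩ Iio y, ENNReal.ofReal (f ξ * r ξ) := by
    intro y hy
    rw [ENNReal.ofReal_mul (hS.inv_p_nonneg hy.1), inter_Iio_inter_Iio hy.2.le,
      ofReal_integral_eq_lintegral_ofReal
        (hS.integrableOn_mul_r_inter_Iio hz hfc hf0 hM hy.2.le)
        (ae_restrict_of_forall_mem (hS.measurableSet_inter_Iio y) fun ξ hξ =>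
          hfr0 ξ ⟨hξ.1, mem_Iio.2 (hξ.2.trans hy.2)⟩)]
  have houter : ∀ ξ ∈ A,
      (∫⁻ y in A ∩ Ioi ξ, ENNReal.ofReal (p y)⁻¹) * ENNReal.ofReal (f ξ * r ξ)
        = ENNReal.ofReal ((∫ t in ξ..z, (p t)⁻¹) * (f ξ * r ξ)) := by
    intro ξ hξ
    have hIcc : Icc ξ z ⊆ I := hS.ordConnected.out hξ.1 hz
    rw [hS.inter_Iio_inter_Ioi hξ.1 hz, ENNReal.ofReal_mul (hq0 ξ hξ),
      ofReal_intervalIntegral_eq_lintegral_Ioo hξ.2.le (hS.continuousOn_inv_p.mono hIcc)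
        fun t ht => hS.inv_p_nonneg (hIcc ht)]
  rw [setLIntegral_congr_fun hAm hinner,
    lintegral_mul_lintegral_inter_Iio_swap
      ((hS.continuousOn_inv_p.mono inter_subset_left).aemeasurable hAm).ennreal_ofReal
      (((hfc.fun_mul hS.continuousOn_r).mono inter_subset_left).aemeasurable hAm).ennreal_ofReal,
    setLIntegral_congr_fun hAm houter, ofReal_integral_eq_lintegral_ofReal
      (hS.integrableOn_integral_inv_p_mul hz hfc hf0 hM)
      (ae_restrict_of_forall_mem hAm fun ξ hξ => mul_nonneg (hq0 ξ hξ) (hfr0 ξ hξ))]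

lemma integrableOn_inv_p_mul_setIntegral :
    IntegrableOn (fun y => (p y)⁻¹ * ∫ ξ in I ∩ Iio y, f ξ * r ξ) (I ∩ Iio z) := by
  have hAm := hS.measurableSet_inter_Iio z
  refine ⟨((hS.continuousOn_inv_p.mono inter_subset_left).mul
    (continuousOn_setIntegral_inter_Iio_of_integrableOn hS.isOpen hS.ordConnected
      (hfc.fun_mul hS.continuousOn_r) (hS.integrableOn_mul_r_inter_Iio hz hfc hf0 hM le_rfl))
    ).aestronglyMeasurable hAm, ?_⟩
  rw [hasFiniteIntegral_iff_ofReal (ae_restrict_of_forall_mem hAm fun y hy =>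
      hS.inv_p_mul_setIntegral_nonneg hf0 hy),
    hS.lintegral_inv_p_mul_setIntegral hz hfc hf0 hM]
  exact ENNReal.ofReal_lt_top

/-- Fubini on the triangle `ξ < y < z`. -/
lemma setIntegral_inv_p_mul_setIntegral :
    ∫ y in I ∩ Iio z, (p y)⁻¹ * ∫ ξ in I ∩ Iio y, f ξ * r ξ
      = ∫ ξ in I ∩ Iio z, (∫ t in ξ..z, (p t)⁻¹) * (f ξ * r ξ) := by
  have hAm := hS.measurableSet_inter_Iio z
  rw [integral_eq_lintegral_of_nonneg_ae (ae_restrict_of_forall_mem hAm fun y hy =>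
      hS.inv_p_mul_setIntegral_nonneg hf0 hy)
      (hS.integrableOn_inv_p_mul_setIntegral hz hfc hf0 hM).1,
    hS.lintegral_inv_p_mul_setIntegral hz hfc hf0 hM, ENNReal.toReal_ofReal]
  exact setIntegral_nonneg hAm fun ξ hξ =>
    mul_nonneg (hS.integral_inv_p_nonneg hξ.1 hz hξ.2.le)
      (mul_nonneg (hf0 ξ hξ) (hS.r_pos ξ hξ.1).le)

end Fubini

lemma hasDerivAt_typeFunction {β x : ℝ} (hβ : β ∈ I) (hx : x ∈ I) :
    HasDerivAt (typeFunction I p r β) ((∫ t in x..β, (p t)⁻¹) * r x) x :=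
  hasDerivAt_setIntegral_inter_Iio hS.isOpen hS.ordConnected
    ((hS.continuousOn_integral_inv_p hβ).mul hS.continuousOn_r)
    (fun _ hx' => hS.integrableOn_integral_inv_p_mul_r hβ hx') hx

lemma continuousOn_typeFunction {β : ℝ} (hβ : β ∈ I) : ContinuousOn (typeFunction I p r β) I :=
  fun _ hx => (hS.hasDerivAt_typeFunction hβ hx).continuousAt.continuousWithinAt

lemma typeFunction_nonneg {β x : ℝ} (hβ : β ∈ I) (hxβ : x ≤ β) :
    0 ≤ typeFunction I p r β x :=
  setIntegral_nonneg (hS.measurableSet_inter_Iio x) fun _ hξ =>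
    hS.integral_inv_p_mul_r_nonneg hξ.1 hβ (hξ.2.le.trans hxβ)

lemma typeFunction_mono {β x y : ℝ} (hβ : β ∈ I) (hx : x ∈ I) (hyx : y ≤ x) (hxβ : x ≤ β) :
    typeFunction I p r β y ≤ typeFunction I p r β x :=
  setIntegral_mono_set (hS.integrableOn_integral_inv_p_mul_r hβ hx)
    (ae_restrict_of_forall_mem (hS.measurableSet_inter_Iio x) fun _ hξ =>
      hS.integral_inv_p_mul_r_nonneg hξ.1 hβ (hξ.2.le.trans hxβ))
    (inter_subset_inter_right _ (Iio_subset_Iio hyx)).eventuallyLE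

lemma typeFunction_pow_le {β x y : ℝ} (hβ : β ∈ I) (hx : x ∈ I) (hyx : y ≤ x) (hxβ : x ≤ β)
    (n : ℕ) : typeFunction I p r β y ^ n ≤ typeFunction I p r β x ^ n :=
  pow_le_pow_left₀ (hS.typeFunction_nonneg hβ (hyx.trans hxβ))
    (hS.typeFunction_mono hβ hx hyx hxβ) n

lemma norm_inv_p {y : ℝ} (hy : y ∈ I) : ‖((p y : ℂ))⁻¹‖ = (p y)⁻¹ := by
  rw [norm_inv, Complex.norm_real, Real.norm_of_nonneg (hS.p_pos y hy).le]

lemma norm_mul_r {y : ℝ} (hy : y ∈ I) (z : ℂ) : ‖z * (r y : ℂ)‖ = ‖z‖ * r y := by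
  rw [norm_mul, Complex.norm_real, Real.norm_of_nonneg (hS.r_pos y hy).le]

lemma norm_volterra_integrand_le {y : ℝ} (hy : y ∈ I) (f : ℝ → ℂ) :
    ‖((p y : ℂ))⁻¹ * ∫ ξ in I ∩ Iio y, f ξ * (r ξ : ℂ)‖
      ≤ (p y)⁻¹ * ∫ ξ in I ∩ Iio y, ‖f ξ‖ * r ξ := by
  rw [norm_mul, hS.norm_inv_p hy]
  refine mul_le_mul_of_nonneg_left ((norm_integral_le_integral_norm _).trans_eq ?_)
    (hS.inv_p_nonneg hy)
  exact setIntegral_congr_fun (hS.measurableSet_inter_Iio y) fun ξ hξ => hS.norm_mul_r hξ.1 _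

lemma continuousOn_mul_r {f : ℝ → ℂ} (hfc : ContinuousOn f I) :
    ContinuousOn (fun ξ => f ξ * (r ξ : ℂ)) I :=
  hfc.fun_mul (Complex.continuous_ofReal.comp_continuousOn hS.continuousOn_r)

lemma continuousOn_inv_ofReal_p : ContinuousOn (fun y => ((p y : ℂ))⁻¹) I :=
  (Complex.continuous_ofReal.comp_continuousOn hS.continuousOn_p).inv₀ fun y hy =>
    Complex.ofReal_ne_zero.2 (hS.p_pos y hy).ne'

section VolterraIntegrand

variable {z M : ℝ} (hz : z ∈ I) {f : ℝ → ℂ} (hfc : ContinuousOn f I)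
  (hM : ∀ ξ ∈ I ∩ Iio z, ‖f ξ‖ ≤ M)
include hz hfc hM

lemma integrableOn_mul_r : IntegrableOn (fun ξ => f ξ * (r ξ : ℂ)) (I ∩ Iio z) :=
  hS.integrableOn_of_norm_le (hS.continuousOn_mul_r hfc) (hS.integrableOn_r hz) fun ξ hξ => by
    rw [hS.norm_mul_r hξ.1]
    exact mul_le_mul_of_nonneg_right (hM ξ hξ) (hS.r_pos ξ hξ.1).le

lemma integrableOn_volterra_integrand :
    IntegrableOn (fun y => ((p y : ℂ))⁻¹ * ∫ ξ in I ∩ Iio y, f ξ * (r ξ : ℂ)) (I ∩ Iio z) :=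
  Integrable.mono'
    (hS.integrableOn_inv_p_mul_setIntegral hz hfc.norm (fun _ _ => norm_nonneg _) hM)
    (((hS.continuousOn_inv_ofReal_p.mono inter_subset_left).mul
      (continuousOn_setIntegral_inter_Iio_of_integrableOn hS.isOpen hS.ordConnected
        (hS.continuousOn_mul_r hfc) (hS.integrableOn_mul_r hz hfc hM))).aestronglyMeasurable
      (hS.measurableSet_inter_Iio z))
    (ae_restrict_of_forall_mem (hS.measurableSet_inter_Iio z) fun _ hy =>
      hS.norm_volterra_integrand_le hy.1 f)

lemma setIntegral_norm_volterra_integrand_le :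
    ∫ y in I ∩ Iio z, ‖((p y : ℂ))⁻¹ * ∫ ξ in I ∩ Iio y, f ξ * (r ξ : ℂ)‖
      ≤ ∫ ξ in I ∩ Iio z, (∫ t in ξ..z, (p t)⁻¹) * (‖f ξ‖ * r ξ) := by
  have hf0 : ∀ ξ ∈ I ∩ Iio z, 0 ≤ ‖f ξ‖ := fun _ _ => norm_nonneg _
  rw [← hS.setIntegral_inv_p_mul_setIntegral hz hfc.norm hf0 hM]
  exact setIntegral_mono_on (hS.integrableOn_volterra_integrand hz hfc hM).norm
    (hS.integrableOn_inv_p_mul_setIntegral hz hfc.norm hf0 hM) (hS.measurableSet_inter_Iio z)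
    fun y hy => hS.norm_volterra_integrand_le hy.1 f

lemma norm_volterra_le :
    ‖volterra I p r f z‖ ≤ ∫ ξ in I ∩ Iio z, (∫ t in ξ..z, (p t)⁻¹) * (‖f ξ‖ * r ξ) :=
  (norm_integral_le_integral_norm _).trans (hS.setIntegral_norm_volterra_integrand_le hz hfc hM)

lemma setIntegral_norm_volterra_integrand_le_mul :
    ∫ y in I ∩ Iio z, ‖((p y : ℂ))⁻¹ * ∫ ξ in I ∩ Iio y, f ξ * (r ξ : ℂ)‖
      ≤ M * typeFunction I p r z z := by
  refine (hS.setIntegral_norm_volterra_integrand_le hz hfc hM).trans ?_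
  rw [typeFunction, ← integral_const_mul]
  refine setIntegral_mono_on (hS.integrableOn_integral_inv_p_mul hz hfc.norm
    (fun _ _ => norm_nonneg _) hM) ((hS.integrableOn_integral_inv_p_mul_r hz hz).const_mul M)
    (hS.measurableSet_inter_Iio z) fun ξ hξ => ?_
  have := mul_le_mul_of_nonneg_left (hM ξ hξ)
    (hS.integral_inv_p_mul_r_nonneg hξ.1 hz hξ.2.le)
  linarith

end VolterraIntegrand

lemma continuousOn_volterra {f : ℝ → ℂ} (hfc : ContinuousOn f I)
    (hbdd : ∀ z ∈ I, ∃ M, ∀ ξ ∈ I ∩ Iio z, ‖f ξ‖ ≤ M) : ContinuousOn (volterra I p r f) I := by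
  choose! M hM using hbdd
  exact continuousOn_setIntegral_inter_Iio hS.isOpen hS.ordConnected
    (hS.continuousOn_inv_ofReal_p.mul (continuousOn_setIntegral_inter_Iio hS.isOpen
      hS.ordConnected (hS.continuousOn_mul_r hfc) fun z hz =>
        hS.integrableOn_mul_r hz hfc (hM z hz)))
    fun z hz => hS.integrableOn_volterra_integrand hz hfc (hM z hz)

lemma continuousOn_mul_typeFunction_pow {β : ℝ} (hβ : β ∈ I) (n : ℕ) :
    ContinuousOn (fun ξ => (∫ t in ξ..β, (p t)⁻¹) * r ξ * typeFunction I p r β ξ ^ n) I :=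
  ((hS.continuousOn_integral_inv_p hβ).mul hS.continuousOn_r).mul
    ((hS.continuousOn_typeFunction hβ).pow n)

lemma integrableOn_mul_typeFunction_pow {β y : ℝ} (hβ : β ∈ I) (hy : y ∈ I) (hyβ : y ≤ β)
    (n : ℕ) :
    IntegrableOn (fun ξ => (∫ t in ξ..β, (p t)⁻¹) * r ξ * typeFunction I p r β ξ ^ n)
      (I ∩ Iio y) := by
  refine hS.integrableOn_of_norm_le (hS.continuousOn_mul_typeFunction_pow hβ n)
    (hS.integrableOn_integral_inv_p_mul_r hβ hy) (M := typeFunction I p r β y ^ n)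
    fun ξ hξ => ?_
  have hqr := hS.integral_inv_p_mul_r_nonneg hξ.1 hβ (hξ.2.le.trans hyβ)
  rw [norm_mul, Real.norm_of_nonneg hqr, Real.norm_of_nonneg
    (pow_nonneg (hS.typeFunction_nonneg hβ (hξ.2.le.trans hyβ)) n), mul_comm]
  exact mul_le_mul_of_nonneg_right (hS.typeFunction_pow_le hβ hy hξ.2.le hyβ n) hqr

lemma setIntegral_mul_typeFunction_pow_le {β y : ℝ} (hβ : β ∈ I) (hy : y ∈ I) (hyβ : y ≤ β)
    (n : ℕ) :
    ∫ ξ in I ∩ Iio y, (∫ t in ξ..β, (p t)⁻¹) * r ξ * typeFunction I p r β ξ ^ n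
      ≤ typeFunction I p r β y ^ (n + 1) / (n + 1) := by
  refine setIntegral_inter_Iio_le_of_hasDerivAt hS.isOpen hS.ordConnected hy
    (hS.continuousOn_mul_typeFunction_pow hβ n) (hS.integrableOn_mul_typeFunction_pow hβ hy hyβ n)
    (G := fun u => typeFunction I p r β u ^ (n + 1) / (n + 1)) (fun u hu => ?_) fun u hu => ?_
  · refine (((hS.hasDerivAt_typeFunction hβ hu).fun_pow (n + 1)).div_const _).congr_deriv ?_
    rw [Nat.add_sub_cancel]
    push_cast
    field_simp
  · exact div_nonneg (pow_nonneg (hS.typeFunction_nonneg hβ (hu.2.le.trans hyβ)) _)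
      (by positivity)

lemma norm_volterra_le_pow {β y c : ℝ} (hβ : β ∈ I) (hy : y ∈ I) (hyβ : y ≤ β) (hc : 0 ≤ c)
    {f : ℝ → ℂ} (hfc : ContinuousOn f I) {n : ℕ}
    (hf : ∀ ξ ∈ I ∩ Iio y, ‖f ξ‖ ≤ c * typeFunction I p r β ξ ^ n / n.factorial) :
    ‖volterra I p r f y‖ ≤ c * typeFunction I p r β y ^ (n + 1) / (n + 1).factorial := by
  set Φ := typeFunction I p r β
  have hfact : (0 : ℝ) < n.factorial := by positivity
  have hM : ∀ ξ ∈ I ∩ Iio y, ‖f ξ‖ ≤ c * Φ y ^ n / n.factorial := fun ξ hξ =>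
    (hf ξ hξ).trans (div_le_div_of_nonneg_right
      (mul_le_mul_of_nonneg_left (hS.typeFunction_pow_le hβ hy hξ.2.le hyβ n) hc) hfact.le)
  calc ‖volterra I p r f y‖
      ≤ ∫ ξ in I ∩ Iio y, (∫ t in ξ..y, (p t)⁻¹) * (‖f ξ‖ * r ξ) :=
        hS.norm_volterra_le hy hfc hM
    _ ≤ ∫ ξ in I ∩ Iio y, c / n.factorial * ((∫ t in ξ..β, (p t)⁻¹) * r ξ * Φ ξ ^ n) := by
        refine setIntegral_mono_on
          (hS.integrableOn_integral_inv_p_mul hy hfc.norm (fun _ _ => norm_nonneg _) hM)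
          ((hS.integrableOn_mul_typeFunction_pow hβ hy hyβ n).const_mul _)
          (hS.measurableSet_inter_Iio y) fun ξ hξ => ?_
        have hqβ := hS.integral_inv_p_mono hξ.1 hy hβ hyβ
        have hq := hS.integral_inv_p_nonneg hξ.1 hy hξ.2.le
        have hr := (hS.r_pos ξ hξ.1).le
        calc (∫ t in ξ..y, (p t)⁻¹) * (‖f ξ‖ * r ξ)
            ≤ (∫ t in ξ..β, (p t)⁻¹) * (c * Φ ξ ^ n / n.factorial * r ξ) :=
              mul_le_mul hqβ (mul_le_mul_of_nonneg_right (hf ξ hξ) hr) (by positivity)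
                (hq.trans hqβ)
          _ = c / n.factorial * ((∫ t in ξ..β, (p t)⁻¹) * r ξ * Φ ξ ^ n) := by ring
    _ = c / n.factorial * ∫ ξ in I ∩ Iio y, (∫ t in ξ..β, (p t)⁻¹) * r ξ * Φ ξ ^ n :=
        integral_const_mul _ _
    _ ≤ c / n.factorial * (Φ y ^ (n + 1) / (n + 1)) := mul_le_mul_of_nonneg_left
        (hS.setIntegral_mul_typeFunction_pow_le hβ hy hyβ n) (div_nonneg hc hfact.le)
    _ = c * Φ y ^ (n + 1) / (n + 1).factorial := by
        rw [Nat.factorial_succ]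
        push_cast
        field_simp

lemma continuousOn_picard_and_norm_le (n : ℕ) :
    ContinuousOn (picard I p r n) I ∧ ∀ β ∈ I, ∀ x ∈ I, x ≤ β →
      ‖picard I p r n x‖ ≤ typeFunction I p r β x ^ n / n.factorial := by
  induction n with
  | zero => exact ⟨continuousOn_const, fun β _ x _ _ => by simp [picard]⟩
  | succ n ih =>
    obtain ⟨hcont, hbound⟩ := ih
    refine ⟨hS.continuousOn_volterra hcont fun z hz => ⟨_, fun ξ hξ =>
      (hbound z hz ξ hξ.1 hξ.2.le).trans (div_le_div_of_nonneg_right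
        (hS.typeFunction_pow_le hz hz hξ.2.le le_rfl n) (Nat.cast_nonneg _))⟩,
      fun β hβ x hx hxβ => ?_⟩
    simpa [picard] using hS.norm_volterra_le_pow hβ hx hxβ zero_le_one hcont (n := n)
      fun ξ hξ => by simpa using hbound β hβ ξ hξ.1 (hξ.2.le.trans hxβ)

lemma continuousOn_picard (n : ℕ) : ContinuousOn (picard I p r n) I :=
  (hS.continuousOn_picard_and_norm_le n).1

lemma norm_picard_le {β x : ℝ} (hβ : β ∈ I) (hx : x ∈ I) (hxβ : x ≤ β) (n : ℕ) :
    ‖picard I p r n x‖ ≤ typeFunction I p r β x ^ n / n.factorial :=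
  (hS.continuousOn_picard_and_norm_le n).2 β hβ x hx hxβ

lemma norm_picard_le_of_lt {z ξ : ℝ} (hz : z ∈ I) (hξ : ξ ∈ I ∩ Iio z) (n : ℕ) :
    ‖picard I p r n ξ‖ ≤ typeFunction I p r z z ^ n / n.factorial :=
  (hS.norm_picard_le hz hξ.1 hξ.2.le n).trans
    (div_le_div_of_nonneg_right (hS.typeFunction_pow_le hz hz hξ.2.le le_rfl n) (Nat.cast_nonneg _))

lemma norm_solution_term_le (lam : ℂ) {β x : ℝ} (hβ : β ∈ I) (hx : x ∈ I) (hxβ : x ≤ β)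
    (n : ℕ) :
    ‖(-lam) ^ n * picard I p r n x‖ ≤ (‖lam‖ * typeFunction I p r β x) ^ n / n.factorial := by
  rw [norm_mul, norm_pow, norm_neg, mul_pow, mul_div_assoc]
  exact mul_le_mul_of_nonneg_left (hS.norm_picard_le hβ hx hxβ n) (by positivity)

lemma summable_norm_solution_term (lam : ℂ) {β x : ℝ} (hβ : β ∈ I) (hx : x ∈ I) (hxβ : x ≤ β) :
    Summable fun n : ℕ => ‖(-lam) ^ n * picard I p r n x‖ :=
  (Real.summable_pow_div_factorial _).of_nonneg_of_le (fun _ => norm_nonneg _)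
    (hS.norm_solution_term_le lam hβ hx hxβ)

lemma norm_solution_le (lam : ℂ) {β x : ℝ} (hβ : β ∈ I) (hx : x ∈ I) (hxβ : x ≤ β) :
    ‖solution I p r lam x‖ ≤ Real.exp (‖lam‖ * typeFunction I p r β x) := by
  rw [Real.exp_eq_exp_ℝ, NormedSpace.exp_eq_tsum_div]
  exact (norm_tsum_le_tsum_norm (hS.summable_norm_solution_term lam hβ hx hxβ)).trans
    (Summable.tsum_le_tsum (hS.norm_solution_term_le lam hβ hx hxβ)
      (hS.summable_norm_solution_term lam hβ hx hxβ) (Real.summable_pow_div_factorial _))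

lemma norm_solution_le_of_lt (lam : ℂ) {z ξ : ℝ} (hz : z ∈ I) (hξ : ξ ∈ I ∩ Iio z) :
    ‖solution I p r lam ξ‖ ≤ Real.exp (‖lam‖ * typeFunction I p r z z) :=
  (hS.norm_solution_le lam hz hξ.1 hξ.2.le).trans (Real.exp_le_exp.2
    (mul_le_mul_of_nonneg_left (hS.typeFunction_mono hz hz hξ.2.le le_rfl) (norm_nonneg _)))

lemma continuousOn_solution (lam : ℂ) : ContinuousOn (solution I p r lam) I := by
  intro x hx
  obtain ⟨β, hxβ, hβ⟩ := hS.isOpen.exists_gt_mem hx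
  have hcont : ContinuousOn (solution I p r lam) (I ∩ Iio β) :=
    continuousOn_tsum (fun n => (continuousOn_const.mul (hS.continuousOn_picard n)).mono
        inter_subset_left)
      (Real.summable_pow_div_factorial (‖lam‖ * typeFunction I p r β β)) fun n ξ hξ =>
      (hS.norm_solution_term_le lam hβ hξ.1 hξ.2.le n).trans (div_le_div_of_nonneg_right
        (pow_le_pow_left₀ (by positivity [hS.typeFunction_nonneg hβ hξ.2.le])
          (mul_le_mul_of_nonneg_left (hS.typeFunction_mono hβ hβ hξ.2.le le_rfl) (norm_nonneg _)) n)
        (Nat.cast_nonneg _))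
  exact (hcont.continuousWithinAt ⟨hx, hxβ⟩).mono_of_mem_nhdsWithin
    (inter_mem self_mem_nhdsWithin (mem_nhdsWithin_of_mem_nhds (Iio_mem_nhds hxβ)))

lemma setIntegral_solution_mul_r (lam : ℂ) {y : ℝ} (hy : y ∈ I) :
    ∫ ξ in I ∩ Iio y, solution I p r lam ξ * (r ξ : ℂ)
      = ∑' n : ℕ, (-lam) ^ n * ∫ ξ in I ∩ Iio y, picard I p r n ξ * (r ξ : ℂ) := by
  have hterm (ξ : ℝ) : solution I p r lam ξ * (r ξ : ℂ)
      = ∑' n : ℕ, (-lam) ^ n * (picard I p r n ξ * (r ξ : ℂ)) := by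
    rw [solution, ← tsum_mul_right]
    exact tsum_congr fun n => mul_assoc _ _ _
  simp only [hterm]
  refine integral_tsum_pow_mul_of_integral_norm_le _ (fun n => hS.integrableOn_mul_r hy
    (hS.continuousOn_picard n) fun ξ hξ => hS.norm_picard_le_of_lt hy hξ n)
    (C := ∫ ξ in I ∩ Iio y, r ξ) (t := typeFunction I p r y y) fun n => ?_
  calc ∫ ξ in I ∩ Iio y, ‖picard I p r n ξ * (r ξ : ℂ)‖
      ≤ ∫ ξ in I ∩ Iio y, typeFunction I p r y y ^ n / n.factorial * r ξ :=
        setIntegral_mono_on (hS.integrableOn_mul_r hy (hS.continuousOn_picard n)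
          fun ξ hξ => hS.norm_picard_le_of_lt hy hξ n).norm
          ((hS.integrableOn_r hy).const_mul _) (hS.measurableSet_inter_Iio y) fun ξ hξ => by
          rw [hS.norm_mul_r hξ.1]
          exact mul_le_mul_of_nonneg_right (hS.norm_picard_le_of_lt hy hξ n) (hS.r_pos ξ hξ.1).le
    _ = (∫ ξ in I ∩ Iio y, r ξ) * typeFunction I p r y y ^ n / n.factorial := by
        rw [integral_const_mul]
        ring

lemma volterra_solution (lam : ℂ) {x : ℝ} (hx : x ∈ I) :
    volterra I p r (solution I p r lam) x = ∑' n : ℕ, (-lam) ^ n * picard I p r (n + 1) x := by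
  have hterm : ∀ y ∈ I ∩ Iio x,
      ((p y : ℂ))⁻¹ * ∫ ξ in I ∩ Iio y, solution I p r lam ξ * (r ξ : ℂ)
        = ∑' n : ℕ, (-lam) ^ n *
          (((p y : ℂ))⁻¹ * ∫ ξ in I ∩ Iio y, picard I p r n ξ * (r ξ : ℂ)) := by
    intro y hy
    rw [hS.setIntegral_solution_mul_r lam hy.1, ← tsum_mul_left]
    exact tsum_congr fun n => mul_left_comm _ _ _
  rw [volterra, setIntegral_congr_fun (hS.measurableSet_inter_Iio x) hterm]
  exact integral_tsum_pow_mul_of_integral_norm_le _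
    (fun n => hS.integrableOn_volterra_integrand hx (hS.continuousOn_picard n)
      fun ξ hξ => hS.norm_picard_le_of_lt hx hξ n)
    (C := typeFunction I p r x x) fun n =>
      (hS.setIntegral_norm_volterra_integrand_le_mul hx (hS.continuousOn_picard n)
        fun ξ hξ => hS.norm_picard_le_of_lt hx hξ n).trans_eq (by ring)

lemma solution_eq (lam : ℂ) {x : ℝ} (hx : x ∈ I) :
    solution I p r lam x = 1 - lam * volterra I p r (solution I p r lam) x := by
  rw [hS.volterra_solution lam hx, solution,
    (hS.summable_norm_solution_term lam hx hx le_rfl).of_norm.tsum_eq_zero_add, ← tsum_mul_left,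
    sub_eq_add_neg, ← tsum_neg]
  congr 1
  · simp [picard]
  · exact tsum_congr fun n => by ring

lemma integrableOn_solution_mul_r (lam : ℂ) {x : ℝ} (hx : x ∈ I) :
    IntegrableOn (fun ξ => solution I p r lam ξ * (r ξ : ℂ)) (I ∩ Iio x) :=
  hS.integrableOn_mul_r hx (hS.continuousOn_solution lam) fun _ hξ =>
    hS.norm_solution_le_of_lt lam hx hξ

lemma integrableOn_volterra_integrand_solution (lam : ℂ) {x : ℝ} (hx : x ∈ I) :
    IntegrableOn (fun y => ((p y : ℂ))⁻¹ * ∫ ξ in I ∩ Iio y, solution I p r lam ξ * (r ξ : ℂ))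
      (I ∩ Iio x) :=
  hS.integrableOn_volterra_integrand hx (hS.continuousOn_solution lam) fun _ hξ =>
    hS.norm_solution_le_of_lt lam hx hξ

lemma volterra_sub {f g : ℝ → ℂ} {x : ℝ}
    (hf : ∀ y ∈ I, IntegrableOn (fun ξ => f ξ * (r ξ : ℂ)) (I ∩ Iio y))
    (hg : ∀ y ∈ I, IntegrableOn (fun ξ => g ξ * (r ξ : ℂ)) (I ∩ Iio y))
    (hVf : IntegrableOn (fun y => ((p y : ℂ))⁻¹ * ∫ ξ in I ∩ Iio y, f ξ * (r ξ : ℂ)) (I ∩ Iio x))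
    (hVg : IntegrableOn (fun y => ((p y : ℂ))⁻¹ * ∫ ξ in I ∩ Iio y, g ξ * (r ξ : ℂ)) (I ∩ Iio x)) :
    volterra I p r f x - volterra I p r g x = volterra I p r (fun ξ => f ξ - g ξ) x := by
  rw [volterra, volterra, volterra, ← integral_sub hVf hVg]
  refine setIntegral_congr_fun (hS.measurableSet_inter_Iio x) fun y hy => ?_
  rw [← mul_sub, ← integral_sub (hf y hy.1) (hg y hy.1)]
  simp only [sub_mul]

lemma eq_zero_of_eq_mul_volterra (μ : ℂ) {d : ℝ → ℂ} (hdc : ContinuousOn d I) {x C : ℝ}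
    (hx : x ∈ I) (hC : ∀ y ∈ I, y ≤ x → ‖d y‖ ≤ C)
    (hd : ∀ y ∈ I, y ≤ x → d y = μ * volterra I p r d y) : d x = 0 := by
  set Φ := typeFunction I p r x
  have hC0 : 0 ≤ C := (norm_nonneg _).trans (hC x hx le_rfl)
  have hiter (n : ℕ) : ∀ y ∈ I, y ≤ x → ‖d y‖ ≤ C * ‖μ‖ ^ n * Φ y ^ n / n.factorial := by
    induction n with
    | zero => simpa using hC
    | succ n ih =>
      intro y hy hyx
      rw [hd y hy hyx, norm_mul]
      calc ‖μ‖ * ‖volterra I p r d y‖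
          ≤ ‖μ‖ * (C * ‖μ‖ ^ n * Φ y ^ (n + 1) / (n + 1).factorial) :=
            mul_le_mul_of_nonneg_left (hS.norm_volterra_le_pow hx hy hyx (by positivity) hdc
              fun ξ hξ => ih ξ hξ.1 (hξ.2.le.trans hyx)) (norm_nonneg _)
        _ = C * ‖μ‖ ^ (n + 1) * Φ y ^ (n + 1) / (n + 1).factorial := by ring
  have hlim : Tendsto (fun n : ℕ => C * ((‖μ‖ * Φ x) ^ n / n.factorial)) atTop (𝓝 0) := by
    simpa using (Real.summable_pow_div_factorial (‖μ‖ * Φ x)).tendsto_atTop_zero.const_mul C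
  refine norm_le_zero_iff.1 (ge_of_tendsto hlim (Eventually.of_forall fun n => ?_))
  exact (hiter n x hx le_rfl).trans_eq (by ring)

lemma eq_solution (lam : ℂ) {w : ℝ → ℂ} (hwc : ContinuousOn w I)
    (hw₁ : ∀ x ∈ I, IntegrableOn (fun ξ => w ξ * (r ξ : ℂ)) (I ∩ Iio x))
    (hw₂ : ∀ x ∈ I, IntegrableOn
      (fun y => ((p y : ℂ))⁻¹ * ∫ ξ in I ∩ Iio y, w ξ * (r ξ : ℂ)) (I ∩ Iio x))
    (hw : ∀ x ∈ I, w x = 1 - lam * volterra I p r w x) {x : ℝ} (hx : x ∈ I) :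
    w x = solution I p r lam x := by
  set J := ∫ y in I ∩ Iio x, ‖((p y : ℂ))⁻¹ * ∫ ξ in I ∩ Iio y, w ξ * (r ξ : ℂ)‖
  have hbound : ∀ y ∈ I, y ≤ x → ‖w y - solution I p r lam y‖
      ≤ (1 + ‖lam‖ * J) + Real.exp (‖lam‖ * typeFunction I p r x x) := by
    intro y hy hyx
    refine (norm_sub_le _ _).trans (add_le_add ?_ ((hS.norm_solution_le lam hx hy hyx).trans
      (Real.exp_le_exp.2 (mul_le_mul_of_nonneg_left (hS.typeFunction_mono hx hx hyx le_rfl)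
        (norm_nonneg _)))))
    rw [hw y hy]
    refine (norm_sub_le _ _).trans ?_
    rw [norm_one, norm_mul]
    gcongr
    exact (norm_integral_le_integral_norm _).trans (setIntegral_mono_set (hw₂ x hx).norm
      (ae_restrict_of_forall_mem (hS.measurableSet_inter_Iio x) fun _ _ => norm_nonneg _)
      (inter_subset_inter_right _ (Iio_subset_Iio hyx)).eventuallyLE)
  refine sub_eq_zero.1 (hS.eq_zero_of_eq_mul_volterra (-lam)
    (d := fun ξ => w ξ - solution I p r lam ξ) (hwc.sub (hS.continuousOn_solution lam)) hx hbound fun y hy _ => ?_)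
  rw [← hS.volterra_sub hw₁ (fun z hz => hS.integrableOn_solution_mul_r lam hz) (hw₂ y hy)
    (hS.integrableOn_volterra_integrand_solution lam hy), hw y hy, hS.solution_eq lam hy]
  ring

lemma analyticOnNhd_solution {x : ℝ} (hx : x ∈ I) :
    AnalyticOnNhd ℂ (fun lam => solution I p r lam x) univ := by
  intro z _
  have hΦ := hS.typeFunction_nonneg hx (le_refl x)
  refine DifferentiableOn.analyticAt (s := Metric.ball 0 (‖z‖ + 1)) ?_
    (Metric.isOpen_ball.mem_nhds (by simp))
  refine Complex.differentiableOn_tsum_of_summable_norm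
    (Real.summable_pow_div_factorial ((‖z‖ + 1) * typeFunction I p r x x))
    (fun n => ((differentiable_id.neg.pow n).mul_const _).differentiableOn) Metric.isOpen_ball
    fun n lam hlam => (hS.norm_solution_term_le lam hx hx le_rfl n).trans ?_
  exact div_le_div_of_nonneg_right (pow_le_pow_left₀ (by positivity)
    (mul_le_mul_of_nonneg_right (mem_ball_zero_iff.1 hlam).le hΦ) n) (Nat.cast_nonneg _)

end Setting

end SturmLiouville

theorem stmt0_general
    -- endpoints: −∞ ≤ a < b ≤ ∞
    (a b : EReal)
    (I : Set ℝ) (hI : I = {x : ℝ | a < (x : EReal) ∧ (x : EReal) < b})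
    -- coefficients
    (p r : ℝ → ℝ)
    (hp : ∀ x ∈ I, 0 < p x) (hr : ∀ x ∈ I, 0 < r x)
    (hpAC : LocAC p I)
    (hrAC : LocAC r I)
    (c : ℝ) (hc : c ∈ I)
    -- left-boundary condition: ∫_a^c ∫_y^c (1/p) dx r(y) dy < ∞
    (hleft : ∫⁻ y in I ∩ Set.Iio c,
        (∫⁻ x in Set.Ioo y c, ENNReal.ofReal (p x)⁻¹) * ENNReal.ofReal (r y) < ⊤) :
    ∃ W : ℂ → ℝ → ℂ,
      -- W λ is, for each λ, a continuous solution of the integral equation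
      (∀ lam : ℂ,
        ContinuousOn (W lam) I ∧
        (∀ x ∈ I, IntegrableOn (fun ξ => W lam ξ * (r ξ : ℂ)) (I ∩ Set.Iio x)) ∧
        (∀ x ∈ I, IntegrableOn
          (fun y => ((p y : ℂ))⁻¹ * ∫ ξ in I ∩ Set.Iio y, W lam ξ * (r ξ : ℂ))
          (I ∩ Set.Iio x)) ∧
        (∀ x ∈ I, W lam x
          = 1 - lam * ∫ y in I ∩ Set.Iio x,
              ((p y : ℂ))⁻¹ * ∫ ξ in I ∩ Set.Iio y, W lam ξ * (r ξ : ℂ))) ∧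
      -- uniqueness: any continuous solution of the integral equation coincides with W λ on I
      (∀ lam : ℂ, ∀ w : ℝ → ℂ,
        (ContinuousOn w I ∧
          (∀ x ∈ I, IntegrableOn (fun ξ => w ξ * (r ξ : ℂ)) (I ∩ Set.Iio x)) ∧
          (∀ x ∈ I, IntegrableOn
            (fun y => ((p y : ℂ))⁻¹ * ∫ ξ in I ∩ Set.Iio y, w ξ * (r ξ : ℂ))
            (I ∩ Set.Iio x)) ∧
          (∀ x ∈ I, w x
            = 1 - lam * ∫ y in I ∩ Set.Iio x,
                ((p y : ℂ))⁻¹ * ∫ ξ in I ∩ Set.Iio y, w ξ * (r ξ : ℂ))) →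
        ∀ x ∈ I, w x = W lam x) ∧
      -- λ ↦ W λ x is entire
      (∀ x ∈ I, AnalyticOnNhd ℂ (fun lam => W lam x) Set.univ) ∧
      -- exponential bound
      (∀ lam : ℂ, ∀ x ∈ I, ∀ β ∈ I, x ≤ β →
        ‖W lam x‖ ≤
          Real.exp (‖lam‖ * ∫ ξ in I ∩ Set.Iio x, (∫ t in ξ..β, (p t)⁻¹) * r ξ) ∧
        Real.exp (‖lam‖ * ∫ ξ in I ∩ Set.Iio x, (∫ t in ξ..β, (p t)⁻¹) * r ξ) ≤
          Real.exp (‖lam‖ * ∫ ξ in I ∩ Set.Iio β, (∫ t in ξ..β, (p t)⁻¹) * r ξ)) ∧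
      -- in particular, λ ↦ W λ x is of exponential type
      (∀ x ∈ I, ∃ C τ : ℝ, ∀ lam : ℂ, ‖W lam x‖ ≤ C * Real.exp (τ * ‖lam‖)) := by
  have hIo : IsOpen I := hI ▸ isOpen_Ioo.preimage continuous_coe_real_ereal
  have hIc : I.OrdConnected := hI ▸ ordConnected_Ioo.preimage_mono EReal.coe_strictMono.monotone
  have hS := SturmLiouville.Setting.of_lintegral_lt_top hIo hIc (hpAC.continuousOn hIo)
    (hrAC.continuousOn hIo) hp hr hc hleft
  refine ⟨SturmLiouville.solution I p r, fun lam => ⟨hS.continuousOn_solution lam,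
      fun x hx => hS.integrableOn_solution_mul_r lam hx,
      fun x hx => hS.integrableOn_volterra_integrand_solution lam hx,
      fun x hx => hS.solution_eq lam hx⟩,
    fun lam w ⟨hwc, hw₁, hw₂, hw⟩ x hx => hS.eq_solution lam hwc hw₁ hw₂ hw hx,
    fun x hx => hS.analyticOnNhd_solution hx,
    fun lam x hx β hβ hxβ => ⟨hS.norm_solution_le lam hβ hx hxβ, ?_⟩,
    fun x hx => ⟨1, SturmLiouville.typeFunction I p r x x, fun lam => ?_⟩⟩
  · exact Real.exp_le_exp.2
      (mul_le_mul_of_nonneg_left (hS.typeFunction_mono hβ hβ hxβ le_rfl) (norm_nonneg _))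
  · rw [one_mul, mul_comm]
    exact hS.norm_solution_le lam hx hx le_rfl

/-- Existence and uniqueness of the solution `w_λ` of the Sturm–Liouville
boundary value problem `ℓ(w) = λ w`, `w(a) = 1`, `w^{[1]}(a) = 0`, formulated through the
equivalent integral equation
`w_λ(x) = 1 − λ ∫_a^x (1/p(y)) (∫_a^y w_λ(ξ) r(ξ) dξ) dy`;
moreover `λ ↦ w_λ(x)` is entire with the stated exponential bound
`|w_λ(x)| ≤ exp(|λ|·𝒮(x)) ≤ exp(|λ|·𝒮(β))` where
`𝒮(x) = ∫_a^x (𝔰(β) − 𝔰(ξ)) r(ξ) dξ` and `𝔰(β) − 𝔰(ξ) = ∫_ξ^β dt/p(t)`;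
in particular `λ ↦ w_λ(x)` is of exponential type. -/
theorem stmt0
    -- endpoints: −∞ ≤ a < b ≤ ∞
    (a b : EReal) (hab : a < b)
    (I : Set ℝ) (hI : I = {x : ℝ | a < (x : EReal) ∧ (x : EReal) < b})
    -- coefficients
    (p r : ℝ → ℝ)
    (hp : ∀ x ∈ I, 0 < p x) (hr : ∀ x ∈ I, 0 < r x)
    (hpAC : LocAC p I) (hp'AC : LocAC (deriv p) I)
    (hrAC : LocAC r I) (hr'AC : LocAC (deriv r) I)
    (c : ℝ) (hc : c ∈ I)
    -- left-boundary condition: ∫_a^c ∫_y^c (1/p) dx r(y) dy < ∞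
    (hleft : ∫⁻ y in I ∩ Set.Iio c,
        (∫⁻ x in Set.Ioo y c, ENNReal.ofReal (p x)⁻¹) * ENNReal.ofReal (r y) < ⊤) :
    ∃ W : ℂ → ℝ → ℂ,
      -- W λ is, for each λ, a continuous solution of the integral equation
      (∀ lam : ℂ,
        ContinuousOn (W lam) I ∧
        (∀ x ∈ I, IntegrableOn (fun ξ => W lam ξ * (r ξ : ℂ)) (I ∩ Set.Iio x)) ∧
        (∀ x ∈ I, IntegrableOn
          (fun y => ((p y : ℂ))⁻¹ * ∫ ξ in I ∩ Set.Iio y, W lam ξ * (r ξ : ℂ))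
          (I ∩ Set.Iio x)) ∧
        (∀ x ∈ I, W lam x
          = 1 - lam * ∫ y in I ∩ Set.Iio x,
              ((p y : ℂ))⁻¹ * ∫ ξ in I ∩ Set.Iio y, W lam ξ * (r ξ : ℂ))) ∧
      -- uniqueness: any continuous solution of the integral equation coincides with W λ on I
      (∀ lam : ℂ, ∀ w : ℝ → ℂ,
        (ContinuousOn w I ∧
          (∀ x ∈ I, IntegrableOn (fun ξ => w ξ * (r ξ : ℂ)) (I ∩ Set.Iio x)) ∧
          (∀ x ∈ I, IntegrableOn
            (fun y => ((p y : ℂ))⁻¹ * ∫ ξ in I ∩ Set.Iio y, w ξ * (r ξ : ℂ))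
            (I ∩ Set.Iio x)) ∧
          (∀ x ∈ I, w x
            = 1 - lam * ∫ y in I ∩ Set.Iio x,
                ((p y : ℂ))⁻¹ * ∫ ξ in I ∩ Set.Iio y, w ξ * (r ξ : ℂ))) →
        ∀ x ∈ I, w x = W lam x) ∧
      -- λ ↦ W λ x is entire
      (∀ x ∈ I, AnalyticOnNhd ℂ (fun lam => W lam x) Set.univ) ∧
      -- exponential bound
      (∀ lam : ℂ, ∀ x ∈ I, ∀ β ∈ I, x ≤ β →
        ‖W lam x‖ ≤
          Real.exp (‖lam‖ * ∫ ξ in I ∩ Set.Iio x, (∫ t in ξ..β, (p t)⁻¹) * r ξ) ∧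
        Real.exp (‖lam‖ * ∫ ξ in I ∩ Set.Iio x, (∫ t in ξ..β, (p t)⁻¹) * r ξ) ≤
          Real.exp (‖lam‖ * ∫ ξ in I ∩ Set.Iio β, (∫ t in ξ..β, (p t)⁻¹) * r ξ)) ∧
      -- in particular, λ ↦ W λ x is of exponential type
      (∀ x ∈ I, ∃ C τ : ℝ, ∀ lam : ℂ, ‖W lam x‖ ≤ C * Real.exp (τ * ‖lam‖)) :=
  stmt0_general a b I hI p r hp hr hpAC hrAC c hc hleft
end

section
/- Let p₁, p₂ ∈ [1,∞] with 1/p₁ + 1/p₂ ≥ 1 and define s ∈ [1,∞] by 1/s = 1/p₁ + 1/p₂ − 1. For h ∈ L_{p₁}(r) and g ∈ L_{p₂}(r), the convolution (h * g)(x) := ∫_a^b (T^y h)(x) g(y) r(y) dy is well defined for almost every x, and the Young inequality ‖h * g‖_s ≤ ‖h‖_{p₁}·‖g‖_{p₂} holds; consequently (h,g) ↦ h*g is a continuous bilinear operator from L_{p₁}(r) × L_{p₂}(r) into L_s(r). -/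
open MeasureTheory Filter Topology
open scoped ENNReal

/-!
Let `K(x, y) = (T^y |h|)(x) = ∫⁻ |h| dν_{x,y}`. The contraction property, applied
to the bounded truncations `min |h| n` and passed to the monotone limit, bounds every column
`K(·, y)` in `L_{p₁}` by `‖h‖_{p₁}`; by the symmetry of `ν` every row obeys the same bound.
Since `|h * g| ≤ ∫ K(·, y) |g y| dy`, what remains is Young's inequality for a nonnegative kernel
with `L_{p₁}`-bounded rows and columns. For `s = ∞` it is Hölder's inequality along a row. For
`s < ∞` one writes `K g = (K^{p₁} g^{p₂})^{1/s} (K^{p₁})^{1/p₁ - 1/s} (g^{p₂})^{1/p₂ - 1/s}`,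
applies the three-factor Hölder inequality in `y`, bounds the middle factor by the row bound,
and integrates `K^{p₁}` in `x` using the column bound.
The row bound also makes `K` finite almost everywhere; this gives the measurability of
`(x, y) ↦ T^y h (x)` (by dominated convergence from bounded truncations of `h`) and the
integrability of the convolution integrand.
-/

lemma ENNReal.ne_top_of_inv_add_inv_eq_inv_add_one {p q s : ℝ≥0∞} (hq : 1 ≤ q)
    (hs : p⁻¹ + q⁻¹ = s⁻¹ + 1) (hst : s ≠ ∞) : p ≠ ∞ := by
  rintro rfl
  rw [ENNReal.inv_top, zero_add] at hs
  have h : s⁻¹ + 1 ≤ 0 + 1 := by rw [zero_add, ← hs]; exact ENNReal.inv_le_one.2 hq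
  exact hst (ENNReal.inv_eq_zero.1
    (nonpos_iff_eq_zero.1 ((ENNReal.add_le_add_iff_right ENNReal.one_ne_top).1 h)))

lemma ENNReal.toReal_inv_add_toReal_inv {p q s : ℝ≥0∞} (hp : p ≠ 0) (hq : q ≠ 0) (hs : s ≠ 0)
    (h : p⁻¹ + q⁻¹ = s⁻¹ + 1) : p.toReal⁻¹ + q.toReal⁻¹ = s.toReal⁻¹ + 1 := by
  have := congrArg ENNReal.toReal h
  rwa [ENNReal.toReal_add (ENNReal.inv_ne_top.2 hp) (ENNReal.inv_ne_top.2 hq),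
    ENNReal.toReal_add (ENNReal.inv_ne_top.2 hs) ENNReal.one_ne_top, ENNReal.toReal_inv,
    ENNReal.toReal_inv, ENNReal.toReal_inv, ENNReal.toReal_one] at this

lemma ENNReal.rpow_mul_rpow_div_sub_one {R S : ℝ} (hR : 0 < R) (hRS : R ≤ S) (z : ℝ≥0∞) :
    z ^ R * (z ^ R) ^ (S / R - 1) = z ^ S := by
  rw [← ENNReal.rpow_mul, ← ENNReal.rpow_add_of_nonneg _ _ hR.le]
  · congr 1; field_simp; ring
  · rw [mul_sub, mul_div_cancel₀ _ hR.ne', mul_one]; linarith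

namespace MeasureTheory

variable {X : Type*} [MeasurableSpace X] {μ : Measure X}

lemma eLpNorm_le_iff_lintegral_rpow_le {f : X → ℝ≥0∞} {p C : ℝ≥0∞} (hp0 : p ≠ 0)
    (hpt : p ≠ ∞) : eLpNorm f p μ ≤ C ↔ ∫⁻ x, f x ^ p.toReal ∂μ ≤ C ^ p.toReal := by
  have hP : 0 < p.toReal := ENNReal.toReal_pos hp0 hpt
  rw [← ENNReal.rpow_le_rpow_iff hP, eLpNorm_eq_eLpNorm' hp0 hpt,
    ← lintegral_rpow_enorm_eq_rpow_eLpNorm' hP]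
  rfl

lemma ae_lt_top_of_eLpNorm_ne_top {f : X → ℝ≥0∞} {p : ℝ≥0∞} (hf : AEMeasurable f μ)
    (hp : p ≠ 0) (h : eLpNorm f p μ ≠ ∞) : ∀ᵐ x ∂μ, f x < ∞ := by
  by_cases hpt : p = ∞
  · subst hpt
    filter_upwards [enorm_ae_le_eLpNormEssSup f μ] with x hx
    exact hx.trans_lt (by rwa [← eLpNorm_exponent_top, lt_top_iff_ne_top])
  · have hP : 0 < p.toReal := ENNReal.toReal_pos hp hpt
    have hint : ∫⁻ x, f x ^ p.toReal ∂μ ≠ ∞ := by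
      refine ((eLpNorm_le_iff_lintegral_rpow_le hp hpt).1 le_rfl).trans_lt ?_ |>.ne
      exact ENNReal.rpow_lt_top_of_nonneg hP.le h
    filter_upwards [ae_lt_top' (hf.pow_const _) hint] with x hx
    exact (ENNReal.rpow_lt_top_iff_of_pos hP).1 hx

lemma eLpNorm_iSup_le_of_monotone {f : ℕ → X → ℝ≥0∞} (hf : ∀ n, AEMeasurable (f n) μ)
    (hmono : Monotone f) {p A : ℝ≥0∞} (hA : ∀ n, eLpNorm (f n) p μ ≤ A) :
    eLpNorm (fun x => ⨆ n, f n x) p μ ≤ A := by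
  rcases eq_or_ne p 0 with rfl | hp0
  · simp
  by_cases hpt : p = ∞
  · subst hpt
    refine essSup_le_of_ae_le _ ?_
    have hle : ∀ n, ∀ᵐ x ∂μ, f n x ≤ A := fun n => by
      filter_upwards [enorm_ae_le_eLpNormEssSup (f n) μ] with x hx
      exact hx.trans (by rw [← eLpNorm_exponent_top]; exact hA n)
    filter_upwards [ae_all_iff.2 hle] with x hx
    exact iSup_le hx
  · have hP : 0 < p.toReal := ENNReal.toReal_pos hp0 hpt
    simp only [eLpNorm_le_iff_lintegral_rpow_le hp0 hpt] at hA ⊢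
    have hpow : ∀ x, (⨆ n, f n x) ^ p.toReal = ⨆ n, f n x ^ p.toReal := fun x =>
      (ENNReal.orderIsoRpow p.toReal hP).map_iSup _
    simp only [hpow]
    rw [lintegral_iSup' (fun n => (hf n).pow_const _)
      (ae_of_all _ fun x m n hmn => ENNReal.rpow_le_rpow (hmono hmn x) hP.le)]
    exact iSup_le hA

lemma lintegral_mul_le_eLpNorm_top_mul_eLpNorm_one {f g : X → ℝ≥0∞} (hg : AEMeasurable g μ) :
    ∫⁻ x, f x * g x ∂μ ≤ eLpNorm f ∞ μ * eLpNorm g 1 μ := by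
  rw [eLpNorm_one_eq_lintegral_enorm, ← lintegral_const_mul'' _ hg.enorm]
  refine lintegral_mono_ae ?_
  filter_upwards [enorm_ae_le_eLpNormEssSup f μ] with x hx
  exact mul_le_mul_left hx _

lemma lintegral_mul_le_eLpNorm_mul_eLpNorm {f g : X → ℝ≥0∞} (hf : AEMeasurable f μ)
    (hg : AEMeasurable g μ) {p q : ℝ≥0∞} [p.HolderConjugate q] :
    ∫⁻ x, f x * g x ∂μ ≤ eLpNorm f p μ * eLpNorm g q μ := by
  by_cases hpt : p = ∞
  · obtain rfl : q = 1 := (ENNReal.HolderConjugate.eq_top_iff_eq_one p q).1 hpt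
    subst hpt
    exact lintegral_mul_le_eLpNorm_top_mul_eLpNorm_one hg
  by_cases hqt : q = ∞
  · obtain rfl : p = 1 := (ENNReal.HolderConjugate.eq_top_iff_eq_one q p).1 hqt
    subst hqt
    simpa only [mul_comm] using lintegral_mul_le_eLpNorm_top_mul_eLpNorm_one (μ := μ) (f := g) hf
  rw [eLpNorm_eq_lintegral_rpow_enorm_toReal (ENNReal.HolderConjugate.ne_zero p q) hpt,
    eLpNorm_eq_lintegral_rpow_enorm_toReal (ENNReal.HolderConjugate.ne_zero q p) hqt]
  exact ENNReal.lintegral_mul_le_Lp_mul_Lq μ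
    (ENNReal.HolderConjugate.toReal_of_ne_top hpt hqt) hf hg

lemma lintegral_mul_rpow_le_of_young_exponents {f g : X → ℝ≥0∞} (hf : AEMeasurable f μ)
    (hg : AEMeasurable g μ) {P Q S : ℝ} (hP : 1 ≤ P) (hQ : 1 ≤ Q) (hS : 0 < S)
    (hPQS : P⁻¹ + Q⁻¹ = S⁻¹ + 1) :
    (∫⁻ x, f x * g x ∂μ) ^ S ≤ (∫⁻ x, f x ^ P * g x ^ Q ∂μ) *
      (∫⁻ x, f x ^ P ∂μ) ^ (S / P - 1) * (∫⁻ x, g x ^ Q ∂μ) ^ (S / Q - 1) := by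
  have hP0 : 0 < P := zero_lt_one.trans_le hP
  have hQ0 : 0 < Q := zero_lt_one.trans_le hQ
  have hPinv : P⁻¹ ≤ 1 := inv_le_one_of_one_le₀ hP
  have hQinv : Q⁻¹ ≤ 1 := inv_le_one_of_one_le₀ hQ
  have he₂ : 0 ≤ P⁻¹ - S⁻¹ := by linarith
  have he₃ : 0 ≤ Q⁻¹ - S⁻¹ := by linarith
  have hsplit : ∀ z w : ℝ≥0∞, z * w =
      (z ^ P * w ^ Q) ^ S⁻¹ * (z ^ P) ^ (P⁻¹ - S⁻¹) * (w ^ Q) ^ (Q⁻¹ - S⁻¹) := by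
    intro z w
    rw [ENNReal.mul_rpow_of_nonneg _ _ (inv_nonneg.2 hS.le), mul_right_comm _ _ ((z ^ P) ^ _),
      mul_assoc, ← ENNReal.rpow_add_of_nonneg _ _ (inv_nonneg.2 hS.le) he₂,
      ← ENNReal.rpow_add_of_nonneg _ _ (inv_nonneg.2 hS.le) he₃, ← ENNReal.rpow_mul,
      ← ENNReal.rpow_mul, add_sub_cancel, add_sub_cancel, mul_inv_cancel₀ hP0.ne',
      mul_inv_cancel₀ hQ0.ne', ENNReal.rpow_one, ENNReal.rpow_one]
  have hHolder := ENNReal.lintegral_prod_norm_pow_le (μ := μ) Finset.univ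
    (f := ![fun x => f x ^ P * g x ^ Q, fun x => f x ^ P, fun x => g x ^ Q])
    (p := ![S⁻¹, P⁻¹ - S⁻¹, Q⁻¹ - S⁻¹])
    (by intro i _; fin_cases i <;> simp <;> fun_prop)
    (by simp [Fin.sum_univ_three]; linarith)
    (by intro i _; fin_cases i <;> simp [he₂, he₃, hS.le])
  simp only [Fin.prod_univ_three, Matrix.cons_val_zero, Matrix.cons_val_one,
    Matrix.cons_val_two, Matrix.head_cons, Matrix.tail_cons] at hHolder
  simp only [← hsplit] at hHolder
  calc (∫⁻ x, f x * g x ∂μ) ^ S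
      ≤ ((∫⁻ x, f x ^ P * g x ^ Q ∂μ) ^ S⁻¹ * (∫⁻ x, f x ^ P ∂μ) ^ (P⁻¹ - S⁻¹) *
          (∫⁻ x, g x ^ Q ∂μ) ^ (Q⁻¹ - S⁻¹)) ^ S := ENNReal.rpow_le_rpow hHolder hS.le
    _ = _ := by
      rw [ENNReal.mul_rpow_of_nonneg _ _ hS.le, ENNReal.mul_rpow_of_nonneg _ _ hS.le,
        ← ENNReal.rpow_mul, ← ENNReal.rpow_mul, ← ENNReal.rpow_mul, inv_mul_cancel₀ hS.ne',
        ENNReal.rpow_one, sub_mul, sub_mul, inv_mul_cancel₀ hS.ne', inv_mul_eq_div,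
        inv_mul_eq_div]

lemma lintegral_rpow_lintegral_kernel_mul_le [SFinite μ] {K : X × X → ℝ≥0∞} (hK : Measurable K)
    {G : X → ℝ≥0∞} (hG : Measurable G) {P Q S : ℝ} (hP : 1 ≤ P) (hQ : 1 ≤ Q) (hS : 0 < S)
    (hPQS : P⁻¹ + Q⁻¹ = S⁻¹ + 1) {A B : ℝ≥0∞}
    (hcol : ∀ᵐ y ∂μ, ∫⁻ x, K (x, y) ^ P ∂μ ≤ A ^ P)
    (hrow : ∀ᵐ x ∂μ, ∫⁻ y, K (x, y) ^ P ∂μ ≤ A ^ P) (hGB : ∫⁻ y, G y ^ Q ∂μ ≤ B ^ Q) :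
    ∫⁻ x, (∫⁻ y, K (x, y) * G y ∂μ) ^ S ∂μ ≤ (A * B) ^ S := by
  have hPS : P ≤ S := by
    rw [← inv_le_inv₀ hS (zero_lt_one.trans_le hP)]
    linarith [inv_le_one_of_one_le₀ hQ]
  have hQS : Q ≤ S := by
    rw [← inv_le_inv₀ hS (zero_lt_one.trans_le hQ)]
    linarith [inv_le_one_of_one_le₀ hP]
  have hPS' : 0 ≤ S / P - 1 := by
    rw [sub_nonneg, one_le_div (zero_lt_one.trans_le hP)]; exact hPS
  have hQS' : 0 ≤ S / Q - 1 := by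
    rw [sub_nonneg, one_le_div (zero_lt_one.trans_le hQ)]; exact hQS
  set C := (A ^ P) ^ (S / P - 1) * (B ^ Q) ^ (S / Q - 1)
  have hKG : Measurable fun z : X × X => K z ^ P * G z.2 ^ Q := by fun_prop
  have hpointwise : ∀ᵐ x ∂μ,
      (∫⁻ y, K (x, y) * G y ∂μ) ^ S ≤ (∫⁻ y, K (x, y) ^ P * G y ^ Q ∂μ) * C := by
    filter_upwards [hrow] with x hx
    refine (lintegral_mul_rpow_le_of_young_exponents (by fun_prop) hG.aemeasurable
      hP hQ hS hPQS).trans ?_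
    rw [mul_assoc]
    gcongr
    exact mul_le_mul' (ENNReal.rpow_le_rpow hx hPS') (ENNReal.rpow_le_rpow hGB hQS')
  have hdouble : ∫⁻ x, ∫⁻ y, K (x, y) ^ P * G y ^ Q ∂μ ∂μ ≤ A ^ P * B ^ Q := by
    rw [lintegral_lintegral_swap hKG.aemeasurable]
    calc ∫⁻ y, ∫⁻ x, K (x, y) ^ P * G y ^ Q ∂μ ∂μ
        = ∫⁻ y, (∫⁻ x, K (x, y) ^ P ∂μ) * G y ^ Q ∂μ := by
          refine lintegral_congr fun y => lintegral_mul_const'' _ (by fun_prop)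
      _ ≤ ∫⁻ y, A ^ P * G y ^ Q ∂μ := by
          refine lintegral_mono_ae ?_
          filter_upwards [hcol] with y hy
          gcongr
      _ ≤ A ^ P * B ^ Q := by
          rw [lintegral_const_mul'' _ (by fun_prop)]
          gcongr
  calc ∫⁻ x, (∫⁻ y, K (x, y) * G y ∂μ) ^ S ∂μ
      ≤ ∫⁻ x, (∫⁻ y, K (x, y) ^ P * G y ^ Q ∂μ) * C ∂μ := lintegral_mono_ae hpointwise
    _ = (∫⁻ x, ∫⁻ y, K (x, y) ^ P * G y ^ Q ∂μ ∂μ) * C :=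
        lintegral_mul_const'' _ hKG.lintegral_prod_right'.aemeasurable
    _ ≤ A ^ P * B ^ Q * C := by gcongr
    _ = (A * B) ^ S := by
        rw [ENNReal.mul_rpow_of_nonneg _ _ hS.le,
          ← ENNReal.rpow_mul_rpow_div_sub_one (zero_lt_one.trans_le hP) hPS A,
          ← ENNReal.rpow_mul_rpow_div_sub_one (zero_lt_one.trans_le hQ) hQS B]
        ring

theorem eLpNorm_lintegral_kernel_mul_le [SFinite μ] {K : X × X → ℝ≥0∞} (hK : Measurable K)
    {G : X → ℝ≥0∞} (hG : Measurable G) {p q s A : ℝ≥0∞} (hp : 1 ≤ p) (hq : 1 ≤ q)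
    (hs : p⁻¹ + q⁻¹ = s⁻¹ + 1) (hcol : ∀ᵐ y ∂μ, eLpNorm (fun x => K (x, y)) p μ ≤ A)
    (hrow : ∀ᵐ x ∂μ, eLpNorm (fun y => K (x, y)) p μ ≤ A) :
    eLpNorm (fun x => ∫⁻ y, K (x, y) * G y ∂μ) s μ ≤ A * eLpNorm G q μ := by
  by_cases hst : s = ∞
  · subst hst
    have : p.HolderConjugate q := ENNReal.holderConjugate_iff.2 (by simpa using hs)
    refine essSup_le_of_ae_le _ ?_
    filter_upwards [hrow] with x hx
    exact (lintegral_mul_le_eLpNorm_mul_eLpNorm (by fun_prop) hG.aemeasurable).trans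
      (by gcongr)
  have hpt : p ≠ ∞ := ENNReal.ne_top_of_inv_add_inv_eq_inv_add_one hq hs hst
  have hqt : q ≠ ∞ :=
    ENNReal.ne_top_of_inv_add_inv_eq_inv_add_one hp (by rwa [add_comm]) hst
  have hp0 : p ≠ 0 := (zero_lt_one.trans_le hp).ne'
  have hq0 : q ≠ 0 := (zero_lt_one.trans_le hq).ne'
  have hs0 : s ≠ 0 := by rintro rfl; simp [hp0, hq0] at hs
  rw [eLpNorm_le_iff_lintegral_rpow_le hs0 hst]
  refine lintegral_rpow_lintegral_kernel_mul_le hK hG (by simpa using ENNReal.toReal_mono hpt hp)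
    (by simpa using ENNReal.toReal_mono hqt hq) (ENNReal.toReal_pos hs0 hst)
    (ENNReal.toReal_inv_add_toReal_inv hp0 hq0 hs0 hs) ?_ ?_
    ((eLpNorm_le_iff_lintegral_rpow_le hq0 hqt).1 le_rfl)
  · filter_upwards [hcol] with y hy using (eLpNorm_le_iff_lintegral_rpow_le hp0 hpt).1 hy
  · filter_upwards [hrow] with x hx using (eLpNorm_le_iff_lintegral_rpow_le hp0 hpt).1 hx

variable {α : Type*} [MeasurableSpace α]

lemma iSup_ofReal_min_natCast (c : ℝ) : ⨆ n : ℕ, ENNReal.ofReal (min c n) = ENNReal.ofReal c :=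
  le_antisymm (iSup_le fun _ => ENNReal.ofReal_le_ofReal (min_le_left _ _))
    (le_iSup_of_le ⌈c⌉₊ (ENNReal.ofReal_le_ofReal (le_min le_rfl (Nat.le_ceil c))))

lemma ofReal_integral_min_natCast {ν : Measure α} [IsFiniteMeasure ν] {f : α → ℝ}
    (hf : Measurable f) (hf0 : ∀ ξ, 0 ≤ f ξ) (n : ℕ) :
    ENNReal.ofReal (∫ ξ, min (f ξ) n ∂ν) = ∫⁻ ξ, ENNReal.ofReal (min (f ξ) n) ∂ν := by
  refine ofReal_integral_eq_lintegral_ofReal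
    (Integrable.of_bound (hf.min measurable_const).aestronglyMeasurable n (ae_of_all _ ?_))
    (ae_of_all _ fun ξ => le_min (hf0 ξ) n.cast_nonneg)
  intro ξ
  rw [Real.norm_of_nonneg (le_min (hf0 ξ) n.cast_nonneg)]
  exact min_le_right _ _

lemma lintegral_ofReal_eq_iSup_ofReal_integral_min {ν : Measure α} [IsFiniteMeasure ν]
    {f : α → ℝ} (hf : Measurable f) (hf0 : ∀ ξ, 0 ≤ f ξ) :
    ∫⁻ ξ, ENNReal.ofReal (f ξ) ∂ν = ⨆ n : ℕ, ENNReal.ofReal (∫ ξ, min (f ξ) n ∂ν) := by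
  simp only [ofReal_integral_min_natCast hf hf0]
  rw [← lintegral_iSup (fun n => (hf.min measurable_const).ennreal_ofReal)
    (fun m n hmn ξ => ENNReal.ofReal_le_ofReal (min_le_min le_rfl (Nat.cast_le.2 hmn)))]
  simp only [iSup_ofReal_min_natCast]

lemma measurable_lintegral_ofReal_of_measurable_integral {Z : Type*} [MeasurableSpace Z]
    {ν : Z → Measure α} [∀ z, IsFiniteMeasure (ν z)]
    (hν : ∀ f : α → ℝ, Measurable f → (∀ ξ, 0 ≤ f ξ) → Measurable fun z => ∫ ξ, f ξ ∂ν z)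
    {f : α → ℝ} (hf : Measurable f) (hf0 : ∀ ξ, 0 ≤ f ξ) :
    Measurable fun z => ∫⁻ ξ, ENNReal.ofReal (f ξ) ∂ν z := by
  simp only [lintegral_ofReal_eq_iSup_ofReal_integral_min hf hf0]
  exact .iSup fun n => (hν _ (hf.min measurable_const)
    fun ξ => le_min (hf0 ξ) n.cast_nonneg).ennreal_ofReal

lemma eLpNorm_lintegral_ofReal_le {ν : X → Measure α} [∀ x, IsFiniteMeasure (ν x)] {f : α → ℝ}
    (hf : Measurable f) (hf0 : ∀ ξ, 0 ≤ f ξ)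
    (hmeas : ∀ n : ℕ, AEMeasurable (fun x => ∫ ξ, min (f ξ) n ∂ν x) μ) {p A : ℝ≥0∞}
    (hA : ∀ n : ℕ, eLpNorm (fun x => ∫ ξ, min (f ξ) n ∂ν x) p μ ≤ A) :
    eLpNorm (fun x => ∫⁻ ξ, ENNReal.ofReal (f ξ) ∂ν x) p μ ≤ A := by
  simp only [lintegral_ofReal_eq_iSup_ofReal_integral_min hf hf0]
  refine eLpNorm_iSup_le_of_monotone (fun n => (hmeas n).ennreal_ofReal) ?_ fun n => ?_
  · intro m n hmn x
    simp only [ofReal_integral_min_natCast hf hf0]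
    exact lintegral_mono fun ξ => ENNReal.ofReal_le_ofReal
      (min_le_min le_rfl (Nat.cast_le.2 hmn))
  · refine le_of_eq_of_le (eLpNorm_congr_enorm_ae (ae_of_all _ fun x => ?_)) (hA n)
    exact (Real.enorm_of_nonneg (integral_nonneg fun ξ => le_min (hf0 ξ) n.cast_nonneg)).symm

lemma aemeasurable_integral_of_ae_lintegral_lt_top {Z : Type*} [MeasurableSpace Z]
    {ρ : Measure Z} {E : Type*} [NormedAddCommGroup E] [NormedSpace ℝ E] [MeasurableSpace E]
    [BorelSpace E] [SecondCountableTopology E] {ν : Z → Measure α}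
    (hν : ∀ f : α → E, Measurable f → (∃ C : ℝ, ∀ ξ, ‖f ξ‖ ≤ C) →
      Measurable fun z => ∫ ξ, f ξ ∂ν z)
    {h : α → E} (hh : Measurable h) (hfin : ∀ᵐ z ∂ρ, ∫⁻ ξ, ‖h ξ‖ₑ ∂ν z < ∞) :
    AEMeasurable (fun z => ∫ ξ, h ξ ∂ν z) ρ := by
  set hn : ℕ → α → E := fun n => {ξ | ‖h ξ‖ ≤ n}.indicator h
  have hnm : ∀ n, Measurable (hn n) := fun n =>
    hh.indicator (measurableSet_le hh.norm measurable_const)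
  have hnle : ∀ n ξ, ‖hn n ξ‖ ≤ ‖h ξ‖ := fun n ξ => norm_indicator_le_norm_self _ _
  have hnbdd : ∀ n, ∃ C : ℝ, ∀ ξ, ‖hn n ξ‖ ≤ C := fun n => ⟨n, fun ξ => by
    rw [norm_indicator_eq_indicator_norm]
    exact Set.indicator_apply_le' id fun _ => n.cast_nonneg⟩
  have hntend : ∀ ξ, Tendsto (fun n => hn n ξ) atTop (𝓝 (h ξ)) := fun ξ =>
    tendsto_atTop_of_eventually_const (i₀ := ⌈‖h ξ‖⌉₊) fun n hn' =>
      Set.indicator_of_mem (s := {ξ | ‖h ξ‖ ≤ n})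
        (show ‖h ξ‖ ≤ n from (Nat.le_ceil _).trans (Nat.cast_le.2 hn')) h
  refine aemeasurable_of_tendsto_metrizable_ae' (fun n => (hν _ (hnm n) (hnbdd n)).aemeasurable) ?_
  filter_upwards [hfin] with z hz
  exact tendsto_integral_of_dominated_convergence (fun ξ => ‖h ξ‖)
    (fun n => (hnm n).aestronglyMeasurable)
    (show Integrable h (ν z) from ⟨hh.aestronglyMeasurable, hz⟩).norm
    (fun n => ae_of_all _ (hnle n)) (ae_of_all _ hntend)

lemma integral_indicator_apply {Z E : Type*} [NormedAddCommGroup E] [NormedSpace ℝ E]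
    {S : Set Z} {ν : Z → Measure α} (f : α → E) (z : Z) :
    ∫ ξ, f ξ ∂(S.indicator ν z) = S.indicator (fun z => ∫ ξ, f ξ ∂ν z) z := by
  by_cases hz : z ∈ S <;> simp [hz]

lemma eLpNorm_integral_min_norm_le {ρ : Measure α} {𝕜 : Type*} [RCLike 𝕜] {ν : X → Measure α}
    {p : ℝ≥0∞} {a : α}
    (hT : ∀ f : α → 𝕜, Measurable f → f a = 0 → MemLp f p ρ →
      eLpNorm (fun x => ∫ ξ, f ξ ∂ν x) p μ ≤ eLpNorm f p ρ)
    {h : α → 𝕜} (hhm : Measurable h) (hha : h a = 0) (hh : MemLp h p ρ) (n : ℕ) :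
    eLpNorm (fun x => ∫ ξ, min ‖h ξ‖ n ∂ν x) p μ ≤ eLpNorm h p ρ := by
  set f : α → 𝕜 := fun ξ => ((min ‖h ξ‖ n : ℝ) : 𝕜)
  have hfm : Measurable f := RCLike.measurable_ofReal.comp (hhm.norm.min measurable_const)
  have hfh : ∀ ξ, ‖f ξ‖ ≤ ‖h ξ‖ := fun ξ => by
    rw [RCLike.norm_ofReal, abs_of_nonneg (le_min (norm_nonneg _) n.cast_nonneg)]
    exact min_le_left _ _
  have hfa : f a = 0 := by simp [f, hha]
  calc eLpNorm (fun x => ∫ ξ, min ‖h ξ‖ n ∂ν x) p μ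
      = eLpNorm (fun x => ∫ ξ, f ξ ∂ν x) p μ :=
        eLpNorm_congr_norm_ae (ae_of_all _ fun x => by simp [f, integral_ofReal])
    _ ≤ eLpNorm f p ρ := hT f hfm hfa (hh.of_le hfm.aestronglyMeasurable (ae_of_all _ hfh))
    _ ≤ eLpNorm h p ρ := eLpNorm_mono hfh

theorem ae_integrable_and_eLpNorm_integral_kernel_mul_le [SFinite μ] {𝕜 : Type*} [RCLike 𝕜]
    {ν : X × X → Measure α} [∀ q, IsFiniteMeasure (ν q)] (hsymm : ∀ x y, ν (x, y) = ν (y, x))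
    (hmeas𝕜 : ∀ f : α → 𝕜, Measurable f → (∃ C : ℝ, ∀ ξ, ‖f ξ‖ ≤ C) →
      Measurable fun q => ∫ ξ, f ξ ∂ν q)
    (hmeasℝ : ∀ f : α → ℝ, Measurable f → (∀ ξ, 0 ≤ f ξ) → Measurable fun q => ∫ ξ, f ξ ∂ν q)
    {p₁ p₂ s A : ℝ≥0∞} (hp₁ : 1 ≤ p₁) (hp₂ : 1 ≤ p₂) (hs : p₁⁻¹ + p₂⁻¹ = s⁻¹ + 1)
    {h : α → 𝕜} (hh : Measurable h) (hA : A ≠ ∞)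
    (hT : ∀ᵐ y ∂μ, ∀ n : ℕ, eLpNorm (fun x => ∫ ξ, min ‖h ξ‖ n ∂ν (x, y)) p₁ μ ≤ A)
    {g : X → 𝕜} (hgm : Measurable g) (hg : eLpNorm g p₂ μ ≠ ∞) :
    (∀ᵐ x ∂μ, Integrable (fun y => (∫ ξ, h ξ ∂ν (x, y)) * g y) μ) ∧
      eLpNorm (fun x => ∫ y, (∫ ξ, h ξ ∂ν (x, y)) * g y ∂μ) s μ ≤ A * eLpNorm g p₂ μ := by
  have hp₁0 : p₁ ≠ 0 := (zero_lt_one.trans_le hp₁).ne'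
  have hs0 : s ≠ 0 := by rintro rfl; simp [hp₁0, (zero_lt_one.trans_le hp₂).ne'] at hs
  set K : X × X → ℝ≥0∞ := fun q => ∫⁻ ξ, ‖h ξ‖ₑ ∂ν q
  have hK : Measurable K := by
    simpa only [K, ofReal_norm] using
      measurable_lintegral_ofReal_of_measurable_integral hmeasℝ hh.norm fun ξ => norm_nonneg _
  have hmin : ∀ n : ℕ, Measurable fun q => ∫ ξ, min ‖h ξ‖ n ∂ν q := fun n =>
    hmeasℝ _ (hh.norm.min measurable_const) fun ξ => le_min (norm_nonneg _) n.cast_nonneg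
  have hcol : ∀ᵐ y ∂μ, eLpNorm (fun x => K (x, y)) p₁ μ ≤ A := by
    filter_upwards [hT] with y hy
    simpa only [K, ofReal_norm] using eLpNorm_lintegral_ofReal_le hh.norm
      (fun ξ => norm_nonneg _) (fun n => ((hmin n).comp measurable_prodMk_right).aemeasurable) hy
  have hrow : ∀ᵐ x ∂μ, eLpNorm (fun y => K (x, y)) p₁ μ ≤ A := by
    filter_upwards [hcol] with x hx
    simpa only [K, hsymm x] using hx
  have hF : eLpNorm (fun x => ∫⁻ y, K (x, y) * ‖g y‖ₑ ∂μ) s μ ≤ A * eLpNorm g p₂ μ := by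
    simpa only [eLpNorm_enorm] using
      eLpNorm_lintegral_kernel_mul_le hK hgm.enorm hp₁ hp₂ hs hcol hrow
  have hFfin : ∀ᵐ x ∂μ, ∫⁻ y, K (x, y) * ‖g y‖ₑ ∂μ < ∞ :=
    ae_lt_top_of_eLpNorm_ne_top (by fun_prop) hs0 (ne_top_of_le_ne_top (by finiteness) hF)
  have hKfin : ∀ᵐ q ∂μ.prod μ, K q < ∞ := by
    refine (Measure.ae_prod_iff_ae_ae (measurableSet_lt hK measurable_const)).2 ?_
    filter_upwards [hrow] with x hx
    exact ae_lt_top_of_eLpNorm_ne_top (by fun_prop) hp₁0 (ne_top_of_le_ne_top hA hx)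
  have hΦ : AEMeasurable (fun q => ∫ ξ, h ξ ∂ν q) (μ.prod μ) :=
    aemeasurable_integral_of_ae_lintegral_lt_top hmeas𝕜 hh hKfin
  have hdom : ∀ x y, ‖(∫ ξ, h ξ ∂ν (x, y)) * g y‖ₑ ≤ K (x, y) * ‖g y‖ₑ := fun x y => by
    rw [enorm_mul]
    gcongr
    exact enorm_integral_le_lintegral_enorm _
  refine ⟨?_, (eLpNorm_mono_enorm fun x => ?_).trans hF⟩
  · filter_upwards [hFfin, Measure.ae_ae_of_ae_prod hΦ.ae_eq_mk] with x hx hsec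
    have hΦx : AEMeasurable (fun y => ∫ ξ, h ξ ∂ν (x, y)) μ :=
      ⟨_, hΦ.measurable_mk.comp measurable_prodMk_left, hsec⟩
    exact ⟨(hΦx.mul hgm.aemeasurable).aestronglyMeasurable,
      (lintegral_mono fun y => hdom x y).trans_lt hx⟩
  · exact (enorm_integral_le_lintegral_enorm _).trans (lintegral_mono fun y => hdom x y)

theorem ae_integrable_and_eLpNorm_integral_kernel_mul_le_of_ae_mem [SFinite μ] {𝕜 : Type*}
    [RCLike 𝕜] {S : Set X} (hS : MeasurableSet S) (hSμ : ∀ᵐ x ∂μ, x ∈ S)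
    {ν : X × X → Measure α} (hfin : ∀ x ∈ S, ∀ y ∈ S, IsFiniteMeasure (ν (x, y)))
    (hsymm : ∀ x ∈ S, ∀ y ∈ S, ν (x, y) = ν (y, x))
    (hmeas𝕜 : ∀ f : α → 𝕜, Measurable f → (∃ C : ℝ, ∀ ξ, ‖f ξ‖ ≤ C) →
      Measurable fun q => ∫ ξ, f ξ ∂ν q)
    (hmeasℝ : ∀ f : α → ℝ, Measurable f → (∀ ξ, 0 ≤ f ξ) → Measurable fun q => ∫ ξ, f ξ ∂ν q)
    {p₁ p₂ s A : ℝ≥0∞} (hp₁ : 1 ≤ p₁) (hp₂ : 1 ≤ p₂) (hs : p₁⁻¹ + p₂⁻¹ = s⁻¹ + 1)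
    {h : α → 𝕜} (hh : Measurable h) (hA : A ≠ ∞)
    (hT : ∀ᵐ y ∂μ, ∀ n : ℕ, eLpNorm (fun x => ∫ ξ, min ‖h ξ‖ n ∂ν (x, y)) p₁ μ ≤ A)
    {g : X → 𝕜} (hgm : Measurable g) (hg : eLpNorm g p₂ μ ≠ ∞) :
    (∀ᵐ x ∂μ, Integrable (fun y => (∫ ξ, h ξ ∂ν (x, y)) * g y) μ) ∧
      eLpNorm (fun x => ∫ y, (∫ ξ, h ξ ∂ν (x, y)) * g y ∂μ) s μ ≤ A * eLpNorm g p₂ μ := by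
  -- off the conull set `S × S` the family is replaced by `0`, which changes nothing a.e.
  set ν' := (S ×ˢ S).indicator ν
  have hν' : ∀ x ∈ S, ∀ y ∈ S, ν' (x, y) = ν (x, y) := fun x hx y hy =>
    Set.indicator_of_mem (Set.mk_mem_prod hx hy) ν
  have hν'0 : ∀ q ∉ S ×ˢ S, ν' q = 0 := fun q hq => Set.indicator_of_notMem hq ν
  have hν'fin : ∀ q, IsFiniteMeasure (ν' q) := fun ⟨x, y⟩ => by
    by_cases hq : x ∈ S ∧ y ∈ S
    · rw [hν' x hq.1 y hq.2]; exact hfin x hq.1 y hq.2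
    · rw [hν'0 _ hq]; infer_instance
  have hν'symm : ∀ x y, ν' (x, y) = ν' (y, x) := fun x y => by
    by_cases hq : x ∈ S ∧ y ∈ S
    · rw [hν' x hq.1 y hq.2, hν' y hq.2 x hq.1, hsymm x hq.1 y hq.2]
    · rw [hν'0 _ hq, hν'0 _ fun h => hq ⟨h.2, h.1⟩]
  have hleft : ∀ y ∈ S, ∀ᵐ x ∂μ, ν' (x, y) = ν (x, y) := fun y hy => by
    filter_upwards [hSμ] with x hx using hν' x hx y hy
  have hright : ∀ x ∈ S, ∀ᵐ y ∂μ, ν' (x, y) = ν (x, y) := fun x hx => by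
    filter_upwards [hSμ] with y hy using hν' x hx y hy
  have hconv : ∀ᵐ x ∂μ, (fun y => (∫ ξ, h ξ ∂ν' (x, y)) * g y) =ᵐ[μ]
      fun y => (∫ ξ, h ξ ∂ν (x, y)) * g y := by
    filter_upwards [hSμ] with x hx
    filter_upwards [hright x hx] with y hy
    rw [hy]
  have hT' : ∀ᵐ y ∂μ, ∀ n : ℕ, eLpNorm (fun x => ∫ ξ, min ‖h ξ‖ n ∂ν' (x, y)) p₁ μ ≤ A := by
    filter_upwards [hT, hSμ] with y hy hyS n
    refine (eLpNorm_congr_ae ?_).trans_le (hy n)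
    filter_upwards [hleft y hyS] with x hx
    rw [hx]
  obtain ⟨hint, hle⟩ := ae_integrable_and_eLpNorm_integral_kernel_mul_le hν'symm
    (fun f hf hfC => by
      simpa only [ν', integral_indicator_apply] using (hmeas𝕜 f hf hfC).indicator (hS.prod hS))
    (fun f hf hf0 => by
      simpa only [ν', integral_indicator_apply] using (hmeasℝ f hf hf0).indicator (hS.prod hS))
    hp₁ hp₂ hs hh hA hT' hgm hg
  refine ⟨?_, (eLpNorm_congr_ae ?_).symm.trans_le hle⟩
  · filter_upwards [hint, hconv] with x hx hxe using hx.congr hxe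
  · filter_upwards [hconv] with x hxe using integral_congr_ae hxe

end MeasureTheory

theorem stmt19_general
    (a : ℝ) (b : EReal)
    (I : Set ℝ) (hI : I = {x : ℝ | a < x ∧ (x : EReal) < b})
    -- the weight r: positive and locally integrable on (a,b)
    (r : ℝ → ℝ)
    (Mr : Measure ℝ)
    (hMr : Mr = (volume.restrict I).withDensity fun x => ENNReal.ofReal (r x))
    -- the family ν_{x,y} of symmetric subprobability measures on [a,b)
    (ν : ℝ × ℝ → Measure ℝ)
    (hνsub : ∀ x ∈ I, ∀ y ∈ I, ν (x, y) Set.univ ≤ 1)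
    (hνsymm : ∀ x ∈ I, ∀ y ∈ I, ν (x, y) = ν (y, x))
    -- joint Borel measurability of (x,y) ↦ (T^y h)(x) for bounded or nonnegative Borel h
    (hmeasC : ∀ h : ℝ → ℂ, Measurable h → (∃ C : ℝ, ∀ ξ, ‖h ξ‖ ≤ C) →
        Measurable (fun q : ℝ × ℝ => ∫ ξ, h ξ ∂(ν q)))
    (hmeasR : ∀ h : ℝ → ℝ, Measurable h → (∀ ξ, 0 ≤ h ξ) →
        Measurable (fun q : ℝ × ℝ => ∫ ξ, h ξ ∂(ν q)))
    -- the contraction property ‖T^y h‖_q ≤ ‖h‖_q for every q ∈ [1,∞], y ∈ (a,b), h ∈ L_q(r)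
    (hcontr : ∀ q : ℝ≥0∞, 1 ≤ q → ∀ y ∈ I, ∀ h : ℝ → ℂ, Measurable h → h a = 0 →
        MemLp h q Mr →
        eLpNorm (fun x => ∫ ξ, h ξ ∂(ν (x, y))) q Mr ≤ eLpNorm h q Mr)
    -- exponents: 1/p₁ + 1/p₂ ≥ 1 and 1/s = 1/p₁ + 1/p₂ − 1
    (p₁ p₂ s : ℝ≥0∞) (hp₁ : 1 ≤ p₁) (hp₂ : 1 ≤ p₂)
    (hs : p₁⁻¹ + p₂⁻¹ = s⁻¹ + 1)
    -- h ∈ L_{p₁}(r) and g ∈ L_{p₂}(r), extended to [a,b) by the value 0 at a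
    (h : ℝ → ℂ) (hhm : Measurable h) (hha : h a = 0) (hh : MemLp h p₁ Mr)
    (g : ℝ → ℂ) (hgm : Measurable g) (hg : MemLp g p₂ Mr) :
    -- the convolution is well defined for a.e. x
    (∀ᵐ x ∂Mr, Integrable (fun y => (∫ ξ, h ξ ∂(ν (x, y))) * g y) Mr) ∧
    -- Young's inequality ‖h * g‖_s ≤ ‖h‖_{p₁} ‖g‖_{p₂}
    eLpNorm (fun x => ∫ y, (∫ ξ, h ξ ∂(ν (x, y))) * g y ∂Mr) s Mr
      ≤ eLpNorm h p₁ Mr * eLpNorm g p₂ Mr := by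
  have hImeas : MeasurableSet I := by
    rw [hI]
    exact measurableSet_Ioi.inter (measurable_coe_real_ereal measurableSet_Iio)
  have hIae : ∀ᵐ x ∂Mr, x ∈ I := by
    rw [hMr]
    exact (withDensity_absolutelyContinuous _ _).ae_le (ae_restrict_mem hImeas)
  have : SFinite Mr := by
    rw [hMr]
    infer_instance
  exact ae_integrable_and_eLpNorm_integral_kernel_mul_le_of_ae_mem hImeas hIae
    (fun x hx y hy => ⟨(hνsub x hx y hy).trans_lt ENNReal.one_lt_top⟩) hνsymm hmeasC hmeasR
    hp₁ hp₂ hs hhm hh.eLpNorm_ne_top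
    (by
      filter_upwards [hIae] with y hy n
      exact eLpNorm_integral_min_norm_le (ν := fun x => ν (x, y)) (hcontr p₁ hp₁ y hy) hhm hha hh n)
    hgm hg.eLpNorm_ne_top

/-- **Young convolution inequality.** Let `1/p₁ + 1/p₂ ≥ 1` and
`1/s = 1/p₁ + 1/p₂ − 1`. For `h ∈ L_{p₁}(r)` and `g ∈ L_{p₂}(r)` the generalized convolution
`(h * g)(x) = ∫_a^b (T^y h)(x) g(y) r(y) dy` is well defined for a.e. `x` and
`‖h * g‖_s ≤ ‖h‖_{p₁}·‖g‖_{p₂}`. -/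
theorem stmt19
    (a : ℝ) (b : EReal) (hab : (a : EReal) < b)
    (I : Set ℝ) (hI : I = {x : ℝ | a < x ∧ (x : EReal) < b})
    (J : Set ℝ) (hJ : J = {x : ℝ | a ≤ x ∧ (x : EReal) < b})
    -- the weight r: positive and locally integrable on (a,b)
    (r : ℝ → ℝ) (hr : ∀ x ∈ I, 0 < r x)
    (hrloc : LocallyIntegrableOn r I)
    (Mr : Measure ℝ)
    (hMr : Mr = (volume.restrict I).withDensity fun x => ENNReal.ofReal (r x))
    -- the family ν_{x,y} of symmetric subprobability measures on [a,b)
    (ν : ℝ × ℝ → Measure ℝ)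
    (hνsub : ∀ x ∈ I, ∀ y ∈ I, ν (x, y) Set.univ ≤ 1)
    (hνsupp : ∀ x ∈ I, ∀ y ∈ I, ν (x, y) Jᶜ = 0)
    (hνsymm : ∀ x ∈ I, ∀ y ∈ I, ν (x, y) = ν (y, x))
    -- joint Borel measurability of (x,y) ↦ (T^y h)(x) for bounded or nonnegative Borel h
    (hmeasC : ∀ h : ℝ → ℂ, Measurable h → (∃ C : ℝ, ∀ ξ, ‖h ξ‖ ≤ C) →
        Measurable (fun q : ℝ × ℝ => ∫ ξ, h ξ ∂(ν q)))
    (hmeasR : ∀ h : ℝ → ℝ, Measurable h → (∀ ξ, 0 ≤ h ξ) →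
        Measurable (fun q : ℝ × ℝ => ∫ ξ, h ξ ∂(ν q)))
    -- the contraction property ‖T^y h‖_q ≤ ‖h‖_q for every q ∈ [1,∞], y ∈ (a,b), h ∈ L_q(r)
    (hcontr : ∀ q : ℝ≥0∞, 1 ≤ q → ∀ y ∈ I, ∀ h : ℝ → ℂ, Measurable h → h a = 0 →
        MemLp h q Mr →
        eLpNorm (fun x => ∫ ξ, h ξ ∂(ν (x, y))) q Mr ≤ eLpNorm h q Mr)
    -- exponents: 1/p₁ + 1/p₂ ≥ 1 and 1/s = 1/p₁ + 1/p₂ − 1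
    (p₁ p₂ s : ℝ≥0∞) (hp₁ : 1 ≤ p₁) (hp₂ : 1 ≤ p₂)
    (hs : p₁⁻¹ + p₂⁻¹ = s⁻¹ + 1)
    -- h ∈ L_{p₁}(r) and g ∈ L_{p₂}(r), extended to [a,b) by the value 0 at a
    (h : ℝ → ℂ) (hhm : Measurable h) (hha : h a = 0) (hh : MemLp h p₁ Mr)
    (g : ℝ → ℂ) (hgm : Measurable g) (hga : g a = 0) (hg : MemLp g p₂ Mr) :
    -- the convolution is well defined for a.e. x
    (∀ᵐ x ∂Mr, Integrable (fun y => (∫ ξ, h ξ ∂(ν (x, y))) * g y) Mr) ∧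
    -- Young's inequality ‖h * g‖_s ≤ ‖h‖_{p₁} ‖g‖_{p₂}
    eLpNorm (fun x => ∫ y, (∫ ξ, h ξ ∂(ν (x, y))) * g y ∂Mr) s Mr
      ≤ eLpNorm h p₁ Mr * eLpNorm g p₂ Mr :=
  stmt19_general a b I hI r Mr hMr ν hνsub hνsymm hmeasC hmeasR hcontr p₁ p₂ s hp₁ hp₂ hs h hhm hha
    hh g hgm hg
end
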